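/- arXiv:1512.03017 — 6 statements merged into one kernel-verified Lean document; each statement's English description precedes it below -/
import Mathlib

section
/- If G and H are nilpotent groups of nilpotency class at most n acting compatibly on each other, then the non-abelian tensor product G ⊗ H is nilpotent of class at most n. -/
universe u

/-- Two groups acting on each other (and on themselves by conjugation) with
compatible actions, in the sense of Brown–Loday. -/
structure CompatibleActions (G H : Type u) [Group G] [Group H] where
  actG : G →* MulAut H
  actH : H →* MulAut G
  compat_left : ∀ (g g' : G) (h : H),
    actH (actG g h) g' = g * actH h (g⁻¹ * g' * g) * g⁻¹
  compat_right : ∀ (g : G) (h h' : H),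
    actG (actH h g) h' = h * actG g (h⁻¹ * h' * h) * h⁻¹

variable {G H : Type u} [Group G] [Group H]

/-- The defining relators of the non-abelian tensor product `G ⊗ H`. -/
def tensorRels (c : CompatibleActions G H) : Set (FreeGroup (G × H)) :=
  {r | ∃ g g' h, r = FreeGroup.of (g * g', h) *
      (FreeGroup.of (g * g' * g⁻¹, c.actG g h) * FreeGroup.of (g, h))⁻¹} ∪
  {r | ∃ g h h', r = FreeGroup.of (g, h * h') *
      (FreeGroup.of (g, h) * FreeGroup.of (c.actH h g, h * h' * h⁻¹))⁻¹}

/-- The non-abelian tensor product `G ⊗ H` of groups acting compatibly on each other. -/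
def NATensor (c : CompatibleActions G H) : Type u :=
  PresentedGroup (tensorRels c)

instance (c : CompatibleActions G H) : Group (NATensor c) := by
  unfold NATensor; infer_instance

/-- The generator `g ⊗ h` of the non-abelian tensor product. -/
def tmul (c : CompatibleActions G H) (g : G) (h : H) : NATensor c :=
  PresentedGroup.of (g, h)

/-- Conjugation actions of a group on itself form compatible actions. -/
def conjActions (G : Type u) [Group G] : CompatibleActions G G where
  actG := MulAut.conj
  actH := MulAut.conj
  compat_left := by intros; simp only [MulAut.conj_apply]; group
  compat_right := by intros; simp only [MulAut.conj_apply]; group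

/-- The non-abelian tensor square `G ⊗ G`. -/
def TensorSquare (G : Type u) [Group G] : Type u := NATensor (conjActions G)

instance (G : Type u) [Group G] : Group (TensorSquare G) := by
  unfold TensorSquare; infer_instance

/-- The derivative subgroup `D_H(G) = ⟨g ⬝ (ʰg)⁻¹ : g ∈ G, h ∈ H⟩ ≤ G`. -/
def derivSubgroupG (c : CompatibleActions G H) : Subgroup G :=
  Subgroup.closure {x | ∃ (g : G) (h : H), x = g * (c.actH h g)⁻¹}

/-- The derivative subgroup `D_G(H) = ⟨h ⬝ (ᵍh)⁻¹ : g ∈ G, h ∈ H⟩ ≤ H`. -/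
def derivSubgroupH (c : CompatibleActions G H) : Subgroup H :=
  Subgroup.closure {x | ∃ (g : G) (h : H), x = h * (c.actG g h)⁻¹}

section Aux

variable {G H : Type u} [Group G] [Group H] (c : CompatibleActions G H)

lemma actG_cancel (g : G) (w : H) : c.actG g (c.actG g⁻¹ w) = w := by
  rw [← MulAut.mul_apply, ← map_mul, mul_inv_cancel, map_one, MulAut.one_apply]

lemma actG_cancel' (g : G) (w : H) : c.actG g⁻¹ (c.actG g w) = w := by
  rw [← MulAut.mul_apply, ← map_mul, inv_mul_cancel, map_one, MulAut.one_apply]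

lemma actH_cancel (h : H) (w : G) : c.actH h (c.actH h⁻¹ w) = w := by
  rw [← MulAut.mul_apply, ← map_mul, mul_inv_cancel, map_one, MulAut.one_apply]

/-- `actG` of `(ʰg)⁻¹`, from compatibility. -/
lemma actG_actH_inv (g : G) (h h' : H) :
    c.actG ((c.actH h g)⁻¹) h' = h * c.actG g⁻¹ (h⁻¹ * h' * h) * h⁻¹ := by
  rw [← map_inv (c.actH h) g]; exact c.compat_right g⁻¹ h h'

lemma rel1 (g g' : G) (h : H) :
    tmul c (g * g') h = tmul c (g * g' * g⁻¹) (c.actG g h) * tmul c g h := by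
  have h1 : (PresentedGroup.mk (tensorRels c)) (FreeGroup.of (g * g', h) *
      (FreeGroup.of (g * g' * g⁻¹, c.actG g h) * FreeGroup.of (g, h))⁻¹) = 1 := by
    apply (QuotientGroup.eq_one_iff _).mpr
    exact Subgroup.subset_normalClosure (Or.inl ⟨g, g', h, rfl⟩)
  rw [map_mul, map_inv, map_mul, mul_inv_eq_one] at h1
  exact h1

lemma rel2 (g : G) (h h' : H) :
    tmul c g (h * h') = tmul c g h * tmul c (c.actH h g) (h * h' * h⁻¹) := by
  have h1 : (PresentedGroup.mk (tensorRels c)) (FreeGroup.of (g, h * h') *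
      (FreeGroup.of (g, h) * FreeGroup.of (c.actH h g, h * h' * h⁻¹))⁻¹) = 1 := by
    apply (QuotientGroup.eq_one_iff _).mpr
    exact Subgroup.subset_normalClosure (Or.inr ⟨g, h, h', rfl⟩)
  rw [map_mul, map_inv, map_mul, mul_inv_eq_one] at h1
  exact h1

end Aux
section Homs

variable {G H : Type u} [Group G] [Group H] (c : CompatibleActions G H)

/-- `λ : G ⊗ H → G`, `g ⊗ h ↦ g * (ʰg)⁻¹`. -/
def lam : NATensor c →* G :=
  PresentedGroup.toGroup (f := fun p : G × H => p.1 * (c.actH p.2 p.1)⁻¹) (by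
    rintro r (⟨g, g', h, rfl⟩ | ⟨g, h, h', rfl⟩) <;>
      rw [map_mul, map_inv, map_mul, mul_inv_eq_one, FreeGroup.lift_apply_of,
        FreeGroup.lift_apply_of, FreeGroup.lift_apply_of]
    · have e1 : g⁻¹ * (g * g' * g⁻¹) * g = g' := by group
      rw [c.compat_left, e1, map_mul (c.actH h) g g']
      group
    · have e : c.actH (h * h' * h⁻¹) (c.actH h g) = c.actH (h * h') g := by
        rw [← MulAut.mul_apply, ← map_mul, show h * h' * h⁻¹ * h = h * h' by group]
      rw [e]
      group)

@[simp] lemma lam_tmul (g : G) (h : H) : lam c (tmul c g h) = g * (c.actH h g)⁻¹ :=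
  PresentedGroup.toGroup.of _

/-- `μ : G ⊗ H → H`, `g ⊗ h ↦ (ᵍh) * h⁻¹`. -/
def mu : NATensor c →* H :=
  PresentedGroup.toGroup (f := fun p : G × H => c.actG p.1 p.2 * p.2⁻¹) (by
    rintro r (⟨g, g', h, rfl⟩ | ⟨g, h, h', rfl⟩) <;>
      rw [map_mul, map_inv, map_mul, mul_inv_eq_one, FreeGroup.lift_apply_of,
        FreeGroup.lift_apply_of, FreeGroup.lift_apply_of]
    · have e : c.actG (g * g' * g⁻¹) (c.actG g h) = c.actG (g * g') h := by
        rw [← MulAut.mul_apply, ← map_mul, show g * g' * g⁻¹ * g = g * g' by group]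
      rw [e]
      group
    · have e1 : h⁻¹ * (h * h' * h⁻¹) * h = h' := by group
      rw [c.compat_right, e1, map_mul (c.actG g) h h']
      group)

@[simp] lemma mu_tmul (g : G) (h : H) : mu c (tmul c g h) = c.actG g h * h⁻¹ :=
  PresentedGroup.toGroup.of _

end Homs
section Core

variable {G H : Type u} [Group G] [Group H] (c : CompatibleActions G H)

lemma core_mid (g g₁ : G) (h h₁ : H) :
    tmul c g h *
      tmul c (c.actH h g * c.actH h g₁ * (c.actH h g)⁻¹) (c.actG (c.actH h g) (h * h₁ * h⁻¹)) =
    tmul c (c.actH (c.actG g h) (g * g₁ * g⁻¹))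
      (c.actG g h * c.actG g h₁ * (c.actG g h)⁻¹) * tmul c g h := by
  have p1 : tmul c (g * g₁) (h * h₁) =
      tmul c (g * g₁ * g⁻¹) (c.actG g h) *
        (tmul c (c.actH (c.actG g h) (g * g₁ * g⁻¹))
            (c.actG g h * c.actG g h₁ * (c.actG g h)⁻¹) *
          (tmul c g h * tmul c (c.actH h g) (h * h₁ * h⁻¹))) := by
    rw [rel1 c g g₁ (h * h₁), rel2 c g h h₁, map_mul (c.actG g) h h₁,
      rel2 c (g * g₁ * g⁻¹) (c.actG g h) (c.actG g h₁), mul_assoc]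
  have p2 : tmul c (g * g₁) (h * h₁) =
      tmul c (g * g₁ * g⁻¹) (c.actG g h) *
        (tmul c g h *
          (tmul c (c.actH h g * c.actH h g₁ * (c.actH h g)⁻¹)
              (c.actG (c.actH h g) (h * h₁ * h⁻¹)) *
            tmul c (c.actH h g) (h * h₁ * h⁻¹))) := by
    rw [rel2 c (g * g₁) h h₁, rel1 c g g₁ h, map_mul (c.actH h) g g₁,
      rel1 c (c.actH h g) (c.actH h g₁) (h * h₁ * h⁻¹), mul_assoc, mul_assoc]
  have key := mul_left_cancel (p1.symm.trans p2)
  rw [← mul_assoc, ← mul_assoc] at key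
  exact (mul_right_cancel key).symm
end Core

section Core2

variable {G H : Type u} [Group G] [Group H] (c : CompatibleActions G H)

lemma conj_tmul (g g' : G) (h h' : H) :
    tmul c g h * tmul c g' h' * (tmul c g h)⁻¹ =
      tmul c (g * (c.actH h g)⁻¹ * g' * (g * (c.actH h g)⁻¹)⁻¹)
        (c.actG (g * (c.actH h g)⁻¹) h') := by
  set a := c.actH h g with ha
  have key := core_mid c g (c.actH h⁻¹ (a⁻¹ * g' * a)) h (h⁻¹ * c.actG a⁻¹ h' * h)
  rw [← ha] at key
  have hA : a * c.actH h (c.actH h⁻¹ (a⁻¹ * g' * a)) * a⁻¹ = g' := by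
    rw [actH_cancel]; group
  have hB : c.actG a (h * (h⁻¹ * c.actG a⁻¹ h' * h) * h⁻¹) = h' := by
    rw [show h * (h⁻¹ * c.actG a⁻¹ h' * h) * h⁻¹ = c.actG a⁻¹ h' by group]
    exact actG_cancel c a h'
  have hC : c.actH (c.actG g h) (g * c.actH h⁻¹ (a⁻¹ * g' * a) * g⁻¹) =
      g * a⁻¹ * g' * (g * a⁻¹)⁻¹ := by
    rw [c.compat_left,
      show g⁻¹ * (g * c.actH h⁻¹ (a⁻¹ * g' * a) * g⁻¹) * g = c.actH h⁻¹ (a⁻¹ * g' * a) by group,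
      actH_cancel]
    group
  have hD : c.actG g h * c.actG g (h⁻¹ * c.actG a⁻¹ h' * h) * (c.actG g h)⁻¹ =
      c.actG (g * a⁻¹) h' := by
    rw [map_mul (c.actG g) (h⁻¹ * c.actG a⁻¹ h') h, map_mul (c.actG g) h⁻¹ (c.actG a⁻¹ h'),
      map_inv, map_mul c.actG g a⁻¹, MulAut.mul_apply]
    group
  rw [hA, hB, hC, hD] at key
  rw [key, mul_inv_cancel_right]

end Core2
section Conj

variable {G H : Type u} [Group G] [Group H] (c : CompatibleActions G H)

/-- The set of `a` for which conjugation by `a` is given by the action of `λ a`. -/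
private def conjSub : Subgroup (NATensor c) where
  carrier := {a | ∀ (g' : G) (h' : H),
    a * tmul c g' h' * a⁻¹ = tmul c (lam c a * g' * (lam c a)⁻¹) (c.actG (lam c a) h')}
  one_mem' := by
    intro g' h'
    simp only [map_one, one_mul, inv_one, mul_one, MulAut.one_apply]
  mul_mem' := by
    intro a b ha hb g' h'
    have : a * b * tmul c g' h' * (a * b)⁻¹ =
        a * (b * tmul c g' h' * b⁻¹) * a⁻¹ := by group
    rw [this, hb g' h', ha, map_mul (lam c) a b, map_mul c.actG, MulAut.mul_apply]
    congr 1
    group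
  inv_mem' := by
    intro a ha g' h'
    have h2 := ha ((lam c a)⁻¹ * g' * lam c a) (c.actG (lam c a)⁻¹ h')
    rw [show lam c a * ((lam c a)⁻¹ * g' * lam c a) * (lam c a)⁻¹ = g' by group,
      actG_cancel] at h2
    rw [map_inv (lam c) a, ← h2]
    group

lemma conj_tmul_all (a : NATensor c) (g' : G) (h' : H) :
    a * tmul c g' h' * a⁻¹ =
      tmul c (lam c a * g' * (lam c a)⁻¹) (c.actG (lam c a) h') := by
  have : a ∈ conjSub c := by
    refine PresentedGroup.generated_by _ (conjSub c) ?_ a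
    rintro ⟨g, h⟩ g' h'
    show tmul c g h * tmul c g' h' * (tmul c g h)⁻¹ =
      tmul c (lam c (tmul c g h) * g' * (lam c (tmul c g h))⁻¹)
        (c.actG (lam c (tmul c g h)) h')
    rw [lam_tmul]
    exact conj_tmul c g g' h h'
  exact this g' h'

/-- The key compatibility: `actG (λ a) = conj (μ a)` for every `a : G ⊗ H`. -/
lemma actG_lam (a : NATensor c) : c.actG (lam c a) = MulAut.conj (mu c a) := by
  have : a ∈ ({a | c.actG (lam c a) = MulAut.conj (mu c a)} : Set (NATensor c)) := by
    refine PresentedGroup.generated_by _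
      { carrier := {a | c.actG (lam c a) = MulAut.conj (mu c a)}
        one_mem' := by
          change c.actG (lam c (1 : NATensor c)) = MulAut.conj (mu c (1 : NATensor c))
          simp only [Set.mem_setOf_eq, map_one]
        mul_mem' := by
          intro a b ha hb
          simp only [Set.mem_setOf_eq, map_mul] at *
          have key : ∀ x y : NATensor c, c.actG (lam c x) = MulAut.conj (mu c x) →
              c.actG (lam c y) = MulAut.conj (mu c y) →
              c.actG (lam c (x * y)) = MulAut.conj (mu c (x * y)) := by
            intro x y hx hy
            simp only [map_mul, hx, hy]
          exact key a b ha hb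
        inv_mem' := by
          intro a ha
          simp only [Set.mem_setOf_eq, map_inv] at *
          have key : ∀ x : NATensor c, c.actG (lam c x) = MulAut.conj (mu c x) →
              c.actG (lam c x⁻¹) = MulAut.conj (mu c x⁻¹) := by
            intro x hx
            simp only [map_inv, hx]
          exact key a ha } ?_ a
    rintro ⟨g, h⟩
    show c.actG (lam c (tmul c g h)) = MulAut.conj (mu c (tmul c g h))
    rw [lam_tmul, mu_tmul]
    apply MulEquiv.ext
    intro h''
    rw [map_mul c.actG, MulAut.mul_apply, actG_actH_inv, MulAut.conj_apply,
      map_mul (c.actG g), map_mul (c.actG g), map_inv (c.actG g), actG_cancel]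
    group
  exact this

end Conj
open scoped commutatorElement
/-- if `G` and `H` are nilpotent of class at most `n` and act compatibly on
each other, then `G ⊗ H` is nilpotent of class at most `n`. -/
theorem tensor_nilpotent_of_class_le {G H : Type u} [Group G] [Group H]
    (c : CompatibleActions G H) (n : ℕ)
    (hG : (⊤ : Subgroup G).lowerCentralSeries n = ⊥) (hH : (⊤ : Subgroup H).lowerCentralSeries n = ⊥) :
    (⊤ : Subgroup (NATensor c)).lowerCentralSeries n = ⊥ := by
  cases n with
  | zero =>
    rw [Subgroup.lowerCentralSeries_zero] at hG ⊢
    have hg1 : ∀ g : G, g = 1 := fun g =>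
      Subgroup.mem_bot.mp (hG ▸ Subgroup.mem_top g)
    have h1h : ∀ h : H, tmul c 1 h = 1 := by
      intro h
      have h0 := rel1 c 1 1 h
      simp only [mul_one, one_mul, inv_one, map_one, MulAut.one_apply] at h0
      exact (left_eq_mul.mp h0)
    rw [eq_bot_iff]
    intro t _
    refine PresentedGroup.generated_by _ ⊥ ?_ t
    rintro ⟨g, h⟩
    refine Subgroup.mem_bot.mpr ?_
    show tmul c g h = 1
    rw [hg1 g]
    exact h1h h
  | succ m =>
    show ⁅(⊤ : Subgroup (NATensor c)).lowerCentralSeries m, ⊤⁆ = ⊥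
    rw [eq_bot_iff, Subgroup.commutator_le]
    intro a ha t _
    refine Subgroup.mem_bot.mpr (commutatorElement_eq_one_iff_commute.mpr ?_)
    have hla : lam c a ∈ (⊤ : Subgroup G).lowerCentralSeries m :=
      Subgroup.lowerCentralSeries.map (lam c) m (Subgroup.mem_map.mpr ⟨a, ha, rfl⟩)
    have hma : mu c a ∈ (⊤ : Subgroup H).lowerCentralSeries m :=
      Subgroup.lowerCentralSeries.map (mu c) m (Subgroup.mem_map.mpr ⟨a, ha, rfl⟩)
    have hgen : ∀ (g : G) (h : H), a * tmul c g h = tmul c g h * a := by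
      intro g h
      have h1 : lam c a * g * (lam c a)⁻¹ = g := by
        have hc : ⁅lam c a, g⁆ = 1 := by
          have hm : ⁅lam c a, g⁆ ∈ (⊤ : Subgroup G).lowerCentralSeries (m + 1) :=
            Subgroup.commutator_mem_commutator hla (Subgroup.mem_top g)
          rw [hG] at hm
          exact Subgroup.mem_bot.mp hm
        rw [(commutatorElement_eq_one_iff_commute.mp hc).eq, mul_inv_cancel_right]
      have h2 : c.actG (lam c a) h = h := by
        rw [actG_lam, MulAut.conj_apply]
        have hc : ⁅mu c a, h⁆ = 1 := by
          have hm : ⁅mu c a, h⁆ ∈ (⊤ : Subgroup H).lowerCentralSeries (m + 1) :=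
            Subgroup.commutator_mem_commutator hma (Subgroup.mem_top h)
          rw [hH] at hm
          exact Subgroup.mem_bot.mp hm
        rw [(commutatorElement_eq_one_iff_commute.mp hc).eq, mul_inv_cancel_right]
      have h3 := conj_tmul_all c a g h
      rw [h1, h2] at h3
      exact mul_inv_eq_iff_eq_mul.mp h3
    have ht : t ∈ Subgroup.centralizer {a} := by
      refine PresentedGroup.generated_by _ _ ?_ t
      rintro ⟨g, h⟩
      refine Subgroup.mem_centralizer_iff.mpr ?_
      rintro y rfl
      exact hgen g h
    exact (Subgroup.mem_centralizer_iff.mp ht a rfl)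
end

section
/- If G is a group of nilpotency class n, then the nilpotency class of the tensor square G ⊗ G is at most ⌈n/2⌉. -/
universe u

open scoped commutatorElement

variable {G H : Type u} [Group G] [Group H]

namespace TSAux

variable {G : Type u} [Group G]

/-- The generator `g ⊗ h` of the tensor square. -/
def tm (g h : G) : TensorSquare G := tmul (conjActions G) g h

lemma tm_congr {a a' b b' : G} (ha : a = a') (hb : b = b') : tm a b = tm a' b' := by
  rw [ha, hb]

lemma mk_rel_one {r : FreeGroup (G × G)} (hr : r ∈ tensorRels (conjActions G)) :
    PresentedGroup.mk (tensorRels (conjActions G)) r = (1 : TensorSquare G) := by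
  exact (QuotientGroup.eq_one_iff _).mpr (Subgroup.subset_normalClosure hr)

lemma rel1 (g g' h : G) : tm (g * g') h = tm (g * g' * g⁻¹) (g * h * g⁻¹) * tm g h := by
  have h1 : (FreeGroup.of (g * g', h) *
      (FreeGroup.of (g * g' * g⁻¹, (conjActions G).actG g h) * FreeGroup.of (g, h))⁻¹)
      ∈ tensorRels (conjActions G) := Or.inl ⟨g, g', h, rfl⟩
  have h2 := mk_rel_one h1
  rw [map_mul, map_inv, map_mul] at h2
  exact mul_inv_eq_one.mp h2

lemma rel2 (g h h' : G) : tm g (h * h') = tm g h * tm (h * g * h⁻¹) (h * h' * h⁻¹) := by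
  have h1 : (FreeGroup.of (g, h * h') *
      (FreeGroup.of (g, h) * FreeGroup.of ((conjActions G).actH h g, h * h' * h⁻¹))⁻¹)
      ∈ tensorRels (conjActions G) := Or.inr ⟨g, h, h', rfl⟩
  have h2 := mk_rel_one h1
  rw [map_mul, map_inv, map_mul] at h2
  exact mul_inv_eq_one.mp h2

lemma one_tm (h : G) : tm (1 : G) h = 1 := by
  have := rel1 (1 : G) 1 h
  simp only [mul_one, inv_one, one_mul] at this
  exact ((left_eq_mul).mp this)

lemma tm_one (g : G) : tm g (1 : G) = 1 := by
  have := rel2 g (1 : G) 1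
  simp only [mul_one, inv_one, one_mul] at this
  exact ((left_eq_mul).mp this)

lemma tm_inv (g h : G) : (tm g h)⁻¹ = tm (h * g * h⁻¹) h⁻¹ := by
  have h2 := rel2 g h h⁻¹
  rw [mul_inv_cancel, tm_one, one_mul] at h2
  exact (inv_eq_of_mul_eq_one_right h2.symm)

end TSAux

namespace TSAux

variable {G : Type u} [Group G]

lemma key (g h a b : G) :
    tm (g * h * a * h⁻¹ * g⁻¹) (g * h * b * h⁻¹ * g⁻¹) * tm g h =
      tm g h * tm (h * g * a * g⁻¹ * h⁻¹) (h * g * b * g⁻¹ * h⁻¹) := by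
  have c1 : tm (g * a * g⁻¹) (g * (h * b) * g⁻¹) =
      tm (g * a * g⁻¹) ((g * h * g⁻¹) * (g * b * g⁻¹)) := tm_congr rfl (by group)
  have c2 : tm ((g * h * g⁻¹) * (g * a * g⁻¹) * (g * h * g⁻¹)⁻¹)
        ((g * h * g⁻¹) * (g * b * g⁻¹) * (g * h * g⁻¹)⁻¹) =
      tm (g * h * a * h⁻¹ * g⁻¹) (g * h * b * h⁻¹ * g⁻¹) := tm_congr (by group) (by group)
  have way1 : tm (g * a) (h * b) =
      tm (g * a * g⁻¹) (g * h * g⁻¹) *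
        tm (g * h * a * h⁻¹ * g⁻¹) (g * h * b * h⁻¹ * g⁻¹) *
          tm g h * tm (h * g * h⁻¹) (h * b * h⁻¹) := by
    rw [rel1 g a (h * b), c1, rel2 (g * a * g⁻¹) (g * h * g⁻¹) (g * b * g⁻¹), c2,
      rel2 g h b]
    simp only [mul_assoc]
  have c3 : tm (h * (g * a) * h⁻¹) (h * b * h⁻¹) =
      tm ((h * g * h⁻¹) * (h * a * h⁻¹)) (h * b * h⁻¹) := tm_congr (by group) rfl
  have c4 : tm ((h * g * h⁻¹) * (h * a * h⁻¹) * (h * g * h⁻¹)⁻¹)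
        ((h * g * h⁻¹) * (h * b * h⁻¹) * (h * g * h⁻¹)⁻¹) =
      tm (h * g * a * g⁻¹ * h⁻¹) (h * g * b * g⁻¹ * h⁻¹) := tm_congr (by group) (by group)
  have way2 : tm (g * a) (h * b) =
      tm (g * a * g⁻¹) (g * h * g⁻¹) * tm g h *
        tm (h * g * a * g⁻¹ * h⁻¹) (h * g * b * g⁻¹ * h⁻¹) *
          tm (h * g * h⁻¹) (h * b * h⁻¹) := by
    rw [rel2 (g * a) h b, rel1 g a h, c3, rel1 (h * g * h⁻¹) (h * a * h⁻¹) (h * b * h⁻¹), c4]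
    simp only [mul_assoc]
  have e : tm (g * a * g⁻¹) (g * h * g⁻¹) *
        tm (g * h * a * h⁻¹ * g⁻¹) (g * h * b * h⁻¹ * g⁻¹) *
          tm g h * tm (h * g * h⁻¹) (h * b * h⁻¹) =
      tm (g * a * g⁻¹) (g * h * g⁻¹) * tm g h *
        tm (h * g * a * g⁻¹ * h⁻¹) (h * g * b * g⁻¹ * h⁻¹) *
          tm (h * g * h⁻¹) (h * b * h⁻¹) := way1.symm.trans way2
  have e2 := mul_right_cancel e
  simp only [mul_assoc] at e2
  have e3 := mul_left_cancel e2
  simpa only [mul_assoc] using e3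

/-- conjugation of a generator by a generator -/
lemma conj_tm (g h a b : G) :
    tm g h * tm a b * (tm g h)⁻¹ =
      tm ((g * h * g⁻¹ * h⁻¹) * a * (g * h * g⁻¹ * h⁻¹)⁻¹)
        ((g * h * g⁻¹ * h⁻¹) * b * (g * h * g⁻¹ * h⁻¹)⁻¹) := by
  have k := key g h ((h * g)⁻¹ * a * (h * g)) ((h * g)⁻¹ * b * (h * g))
  have e1 : tm (h * g * ((h * g)⁻¹ * a * (h * g)) * g⁻¹ * h⁻¹)
      (h * g * ((h * g)⁻¹ * b * (h * g)) * g⁻¹ * h⁻¹) = tm a b :=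
    tm_congr (by group) (by group)
  have e2 : tm (g * h * ((h * g)⁻¹ * a * (h * g)) * h⁻¹ * g⁻¹)
      (g * h * ((h * g)⁻¹ * b * (h * g)) * h⁻¹ * g⁻¹) =
      tm ((g * h * g⁻¹ * h⁻¹) * a * (g * h * g⁻¹ * h⁻¹)⁻¹)
        ((g * h * g⁻¹ * h⁻¹) * b * (g * h * g⁻¹ * h⁻¹)⁻¹) :=
    tm_congr (by group) (by group)
  rw [e1, e2] at k
  rw [← k]
  group

end TSAux

namespace TSAux

variable {G : Type u} [Group G]

lemma kap_rels : ∀ r ∈ tensorRels (conjActions G),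
    FreeGroup.lift (fun p : G × G => p.1 * p.2 * p.1⁻¹ * p.2⁻¹) r = 1 := by
  rintro r (⟨g, g', h, rfl⟩ | ⟨g, h, h', rfl⟩) <;>
  · simp only [map_mul, map_inv, FreeGroup.lift_apply_of, conjActions, MulAut.conj_apply]
    group

/-- The commutator homomorphism `κ : G ⊗ G → G`. -/
def kap : TensorSquare G →* G := PresentedGroup.toGroup kap_rels

lemma kap_tm (g h : G) : kap (tm g h) = g * h * g⁻¹ * h⁻¹ :=
  PresentedGroup.toGroup.of kap_rels

lemma A_rels (g : G) : ∀ r ∈ tensorRels (conjActions G),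
    FreeGroup.lift (fun p : G × G => tm (g * p.1 * g⁻¹) (g * p.2 * g⁻¹)) r = 1 := by
  rintro r (⟨a, a', b, rfl⟩ | ⟨a, b, b', rfl⟩) <;>
    simp only [map_mul, map_inv, FreeGroup.lift_apply_of, conjActions, MulAut.conj_apply] <;>
    rw [mul_inv_eq_one]
  · calc tm (g * (a * a') * g⁻¹) (g * b * g⁻¹)
        = tm ((g * a * g⁻¹) * (g * a' * g⁻¹)) (g * b * g⁻¹) := tm_congr (by group) rfl
      _ = tm ((g * a * g⁻¹) * (g * a' * g⁻¹) * (g * a * g⁻¹)⁻¹)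
            ((g * a * g⁻¹) * (g * b * g⁻¹) * (g * a * g⁻¹)⁻¹) *
            tm (g * a * g⁻¹) (g * b * g⁻¹) := rel1 _ _ _
      _ = tm (g * (a * a' * a⁻¹) * g⁻¹) (g * (a * b * a⁻¹) * g⁻¹) *
            tm (g * a * g⁻¹) (g * b * g⁻¹) := by
          exact congrArg (fun z => z * tm (g * a * g⁻¹) (g * b * g⁻¹))
            (tm_congr (by group) (by group))
  · calc tm (g * a * g⁻¹) (g * (b * b') * g⁻¹)
        = tm (g * a * g⁻¹) ((g * b * g⁻¹) * (g * b' * g⁻¹)) := tm_congr rfl (by group)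
      _ = tm (g * a * g⁻¹) (g * b * g⁻¹) *
            tm ((g * b * g⁻¹) * (g * a * g⁻¹) * (g * b * g⁻¹)⁻¹)
              ((g * b * g⁻¹) * (g * b' * g⁻¹) * (g * b * g⁻¹)⁻¹) := rel2 _ _ _
      _ = tm (g * a * g⁻¹) (g * b * g⁻¹) *
            tm (g * (b * a * b⁻¹) * g⁻¹) (g * (b * b' * b⁻¹) * g⁻¹) := by
          exact congrArg (fun z => tm (g * a * g⁻¹) (g * b * g⁻¹) * z)
            (tm_congr (by group) (by group))

/-- The diagonal conjugation action of `G` on `G ⊗ G`. -/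
def Aaux (g : G) : TensorSquare G →* TensorSquare G := PresentedGroup.toGroup (A_rels g)

lemma Aaux_tm (g a b : G) : Aaux g (tm a b) = tm (g * a * g⁻¹) (g * b * g⁻¹) :=
  PresentedGroup.toGroup.of (A_rels g)

lemma Aaux_mul (g₁ g₂ : G) (t : TensorSquare G) :
    Aaux (g₁ * g₂) t = Aaux g₁ (Aaux g₂ t) := by
  have : Aaux (g₁ * g₂) = (Aaux g₁).comp (Aaux g₂) := by
    apply PresentedGroup.ext
    rintro ⟨a, b⟩
    show Aaux (g₁ * g₂) (tm a b) = Aaux g₁ (Aaux g₂ (tm a b))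
    rw [Aaux_tm, Aaux_tm, Aaux_tm]
    exact tm_congr (by group) (by group)
  rw [this]; rfl

lemma Aaux_one (t : TensorSquare G) : Aaux (1 : G) t = t := by
  have : Aaux (1 : G) = MonoidHom.id (TensorSquare G) := by
    apply PresentedGroup.ext
    rintro ⟨a, b⟩
    show Aaux (1 : G) (tm a b) = tm a b
    rw [Aaux_tm]
    exact tm_congr (by group) (by group)
  rw [this]; rfl

lemma tm_induction {C : TensorSquare G → Prop} (h1 : C 1) (hof : ∀ g h, C (tm g h))
    (hinv : ∀ x, C x → C x⁻¹) (hmul : ∀ x y, C x → C y → C (x * y)) : ∀ x, C x := by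
  intro x
  induction x using PresentedGroup.induction_on with
  | H z =>
    induction z using FreeGroup.induction_on with
    | C1 => rw [map_one]; exact h1
    | of p => exact hof p.1 p.2
    | inv_of p hp => rw [map_inv]; exact hinv _ hp
    | mul x y hx hy => rw [map_mul]; exact hmul _ _ hx hy

lemma conj_eq (x t : TensorSquare G) : x * t * x⁻¹ = Aaux (kap x) t := by
  revert t
  refine tm_induction (C := fun x => ∀ t, x * t * x⁻¹ = Aaux (kap x) t) ?_ ?_ ?_ ?_ x
  · intro t; rw [map_one]; rw [Aaux_one]; group
  · intro g h
    refine tm_induction ?_ ?_ ?_ ?_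
    · rw [map_one]; group
    · intro a b
      rw [conj_tm, kap_tm, Aaux_tm]
    · intro t ht
      have e : tm g h * t⁻¹ * (tm g h)⁻¹ = (tm g h * t * (tm g h)⁻¹)⁻¹ := by group
      rw [e, ht, ← map_inv]
    · intro t s ht hs
      have e : tm g h * (t * s) * (tm g h)⁻¹ =
          (tm g h * t * (tm g h)⁻¹) * (tm g h * s * (tm g h)⁻¹) := by group
      rw [e, ht, hs, ← map_mul]
  · intro x hx t
    have h2 : x * (Aaux (kap x⁻¹) t) * x⁻¹ = t := by
      rw [hx, ← Aaux_mul, ← map_mul, mul_inv_cancel, map_one, Aaux_one]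
    calc x⁻¹ * t * x⁻¹⁻¹ = x⁻¹ * (x * (Aaux (kap x⁻¹) t) * x⁻¹) * x⁻¹⁻¹ := by rw [h2]
      _ = Aaux (kap x⁻¹) t := by group
  · intro x y hx hy t
    have e : x * y * t * (x * y)⁻¹ = x * (y * t * y⁻¹) * x⁻¹ := by group
    rw [e, hy, hx, ← Aaux_mul, ← map_mul]

end TSAux

namespace TSAux

variable {G : Type u} [Group G]

lemma Aaux_mul_inv (t : TensorSquare G) : ∀ c : G, Aaux c t * t⁻¹ = tm c (kap t) := by
  refine tm_induction (C := fun t => ∀ c : G, Aaux c t * t⁻¹ = tm c (kap t)) ?_ ?_ ?_ ?_ t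
  · intro c; rw [map_one, map_one, tm_one]; group
  · intro a b c
    rw [Aaux_tm, kap_tm]
    -- goal : tm (c*a*c⁻¹) (c*b*c⁻¹) * (tm a b)⁻¹ = tm c (a*b*a⁻¹*b⁻¹)
    have s1 : tm (c * a) b = tm (c * a * c⁻¹) (c * b * c⁻¹) * tm c b := rel1 c a b
    have s2 : tm (c * a) b = tm c (a * b * a⁻¹) * tm a b := by
      have e0 : tm (c * a) b = tm (a * (a⁻¹ * c * a)) b := tm_congr (by group) rfl
      rw [e0, rel1 a (a⁻¹ * c * a) b]
      exact congrArg (fun z => z * tm a b) (tm_congr (by group) (by group))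
    have s12 : tm (c * a * c⁻¹) (c * b * c⁻¹) =
        tm c (a * b * a⁻¹) * tm a b * (tm c b)⁻¹ := by
      rw [← s1.symm.trans s2]; group
    have s3 := conj_tm a b c b
    have s4 : (tm ((a * b * a⁻¹ * b⁻¹) * c * (a * b * a⁻¹ * b⁻¹)⁻¹)
        ((a * b * a⁻¹ * b⁻¹) * b * (a * b * a⁻¹ * b⁻¹)⁻¹))⁻¹ =
        tm ((a * b * a⁻¹) * c * (a * b * a⁻¹)⁻¹)
          ((a * b * a⁻¹ * b⁻¹) * b⁻¹ * (a * b * a⁻¹ * b⁻¹)⁻¹) := by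
      rw [tm_inv]
      exact tm_congr (by group) (by group)
    have s5 : tm c (a * b * a⁻¹ * b⁻¹) =
        tm c (a * b * a⁻¹) * tm ((a * b * a⁻¹) * c * (a * b * a⁻¹)⁻¹)
          ((a * b * a⁻¹ * b⁻¹) * b⁻¹ * (a * b * a⁻¹ * b⁻¹)⁻¹) := by
      have e0 : tm c (a * b * a⁻¹ * b⁻¹) = tm c ((a * b * a⁻¹) * b⁻¹) :=
        tm_congr rfl (by group)
      rw [e0, rel2 c (a * b * a⁻¹) b⁻¹]
      exact congrArg (fun z => tm c (a * b * a⁻¹) * z) (tm_congr (by group) (by group))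
    rw [s12, s5, ← s4, ← s3]
    group
  · intro t ht c
    have hAct : Aaux c t⁻¹ = t⁻¹ * (tm c (kap t))⁻¹ := by
      rw [map_inv]
      have := ht c
      have e : Aaux c t = tm c (kap t) * t := by rw [← this]; group
      rw [e]; group
    rw [hAct, inv_inv]
    have e2 : t⁻¹ * (tm c (kap t))⁻¹ * t = t⁻¹ * (tm c (kap t))⁻¹ * (t⁻¹)⁻¹ := by group
    rw [e2, conj_eq t⁻¹ (tm c (kap t))⁻¹, map_inv, map_inv, Aaux_tm, tm_inv]
    exact tm_congr (by group) (by group)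
  · intro t s ht hs c
    have e : Aaux c (t * s) * (t * s)⁻¹ =
        (Aaux c t * t⁻¹) * (t * (Aaux c s * s⁻¹) * t⁻¹) := by
      rw [map_mul]; group
    rw [e, ht, hs, conj_eq t (tm c (kap s)), Aaux_tm, map_mul]
    exact (rel2 c (kap t) (kap s)).symm

/-- In the tensor square, `[x, y] = κ(x) ⊗ κ(y)`. -/
lemma comm_eq (x y : TensorSquare G) : x * y * x⁻¹ * y⁻¹ = tm (kap x) (kap y) := by
  rw [conj_eq x y]
  exact Aaux_mul_inv y (kap x)

end TSAux

namespace TSAux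

variable {G : Type u} [Group G]

lemma central_tm {a : G} (ha : ∀ g : G, a * g = g * a) {b : G}
    (hb : b ∈ commutator G) : tm a b = 1 := by
  have hconj1 : ∀ p : G, a * p * a⁻¹ = p := fun p => by rw [ha p]; group
  have hconj2 : ∀ p : G, p * a * p⁻¹ = a := fun p => by rw [← ha p]; group
  have base : ∀ p q : G, tm a (p * q * p⁻¹ * q⁻¹) = 1 := by
    intro p q
    have h1 := Aaux_mul_inv (tm p q) a
    rw [Aaux_tm, kap_tm] at h1
    have e1 : tm (a * p * a⁻¹) (a * q * a⁻¹) = tm p q :=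
      tm_congr (hconj1 p) (hconj1 q)
    rw [e1, mul_inv_cancel] at h1
    exact h1.symm
  let S : Subgroup G :=
    { carrier := {h | ∀ k : G, tm a (k * h * k⁻¹) = 1}
      one_mem' := by
        intro k
        rw [show k * (1 : G) * k⁻¹ = 1 by group, tm_one]
      mul_mem' := by
        intro p q hp hq k
        have e0 : tm a (k * (p * q) * k⁻¹) =
            tm a ((k * p * k⁻¹) * (k * q * k⁻¹)) := tm_congr rfl (by group)
        rw [e0, rel2 a (k * p * k⁻¹) (k * q * k⁻¹)]
        have e1 : tm ((k * p * k⁻¹) * a * (k * p * k⁻¹)⁻¹)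
            ((k * p * k⁻¹) * (k * q * k⁻¹) * (k * p * k⁻¹)⁻¹) =
            tm a ((k * p) * q * (k * p)⁻¹) :=
          tm_congr (hconj2 (k * p * k⁻¹)) (by group)
        rw [e1, hp k, hq (k * p), one_mul]
      inv_mem' := by
        intro p hp k
        have e := tm_inv a (k * p * k⁻¹)
        rw [hconj2 (k * p * k⁻¹), hp k] at e
        have e2 : tm a ((k * p * k⁻¹))⁻¹ = tm a (k * p⁻¹ * k⁻¹) :=
          tm_congr rfl (by group)
        rw [← e2, ← e]
        group }
  have hle : commutator G ≤ S := by
    rw [commutator_def]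
    apply (Subgroup.commutator_le).mpr
    intro p _ q _
    intro k
    have e0 : tm a (k * ⁅p, q⁆ * k⁻¹) =
        tm a ((k * p * k⁻¹) * (k * q * k⁻¹) * (k * p * k⁻¹)⁻¹ * (k * q * k⁻¹)⁻¹) :=
      tm_congr rfl (by rw [commutatorElement_def]; group)
    rw [e0]
    exact base _ _
  have hbS : b ∈ S := hle hb
  have := hbS (1 : G)
  rwa [show (1 : G) * b * (1 : G)⁻¹ = b by group] at this

lemma lcs_succ_eq (H : Type*) [Group H] (n : ℕ) :
    (⊤ : Subgroup H).lowerCentralSeries (n + 1) = ⁅(⊤ : Subgroup H).lowerCentralSeries n, ⊤⁆ := rfl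

lemma kap_mem (x : TensorSquare G) : kap x ∈ (⊤ : Subgroup G).lowerCentralSeries 1 := by
  refine tm_induction (C := fun x => kap x ∈ (⊤ : Subgroup G).lowerCentralSeries 1) ?_ ?_ ?_ ?_ x
  · show kap (1 : TensorSquare G) ∈ (⊤ : Subgroup G).lowerCentralSeries 1
    rw [map_one]; exact Subgroup.one_mem _
  · intro g h
    rw [kap_tm, lowerCentralSeries_one]
    have : g * h * g⁻¹ * h⁻¹ = ⁅g, h⁆ := (commutatorElement_def g h).symm
    rw [this, commutator_def]
    exact Subgroup.commutator_mem_commutator (Subgroup.mem_top g) (Subgroup.mem_top h)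
  · intro t ht; rw [map_inv]; exact Subgroup.inv_mem _ ht
  · intro t s ht hs; rw [map_mul]; exact Subgroup.mul_mem _ ht hs

lemma lcs_comm (H : Type*) [Group H] : ∀ j i : ℕ,
    ⁅(⊤ : Subgroup H).lowerCentralSeries i, (⊤ : Subgroup H).lowerCentralSeries j⁆ ≤ (⊤ : Subgroup H).lowerCentralSeries (i + j + 1) := by
  intro j
  induction j with
  | zero =>
    intro i
    rw [lcs_succ_eq]
    exact Subgroup.commutator_mono le_rfl le_top
  | succ j ih =>
    intro i
    set N := (⊤ : Subgroup H).lowerCentralSeries (i + (j + 1) + 1) with hN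
    let π : H →* H ⧸ N := QuotientGroup.mk' N
    have hsurj : Function.Surjective π := QuotientGroup.mk'_surjective N
    have hmapbot : ∀ K : Subgroup H, K ≤ N → Subgroup.map π K = ⊥ := fun K hK => by
      rw [Subgroup.map_eq_bot_iff, QuotientGroup.ker_mk']; exact hK
    rw [show N = MonoidHom.ker π from (QuotientGroup.ker_mk' N).symm,
      ← Subgroup.map_eq_bot_iff, Subgroup.map_commutator]
    have h21 : Subgroup.map π ((⊤ : Subgroup H).lowerCentralSeries (j + 1)) =
        ⁅Subgroup.map π ((⊤ : Subgroup H).lowerCentralSeries j), (⊤ : Subgroup (H ⧸ N))⁆ := by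
      rw [lcs_succ_eq, Subgroup.map_commutator,
        Subgroup.map_top_of_surjective π hsurj]
    rw [h21, Subgroup.commutator_comm]
    apply Subgroup.commutator_commutator_eq_bot_of_rotate
    · have e1 : ⁅(⊤ : Subgroup (H ⧸ N)), Subgroup.map π ((⊤ : Subgroup H).lowerCentralSeries i)⁆ =
          Subgroup.map π ((⊤ : Subgroup H).lowerCentralSeries (i + 1)) := by
        rw [Subgroup.commutator_comm, ← Subgroup.map_top_of_surjective π hsurj,
          ← Subgroup.map_commutator, ← lcs_succ_eq]
      rw [e1, ← Subgroup.map_commutator]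
      apply hmapbot
      have h := ih (i + 1)
      rw [show i + 1 + j + 1 = i + (j + 1) + 1 by omega] at h
      exact h
    · rw [← Subgroup.map_commutator, ← Subgroup.map_top_of_surjective π hsurj,
        ← Subgroup.map_commutator]
      apply hmapbot
      calc ⁅⁅(⊤ : Subgroup H).lowerCentralSeries i, (⊤ : Subgroup H).lowerCentralSeries j⁆, (⊤ : Subgroup H)⁆
          ≤ ⁅(⊤ : Subgroup H).lowerCentralSeries (i + j + 1), (⊤ : Subgroup H)⁆ :=
            Subgroup.commutator_mono (ih i) le_rfl
        _ = (⊤ : Subgroup H).lowerCentralSeries (i + j + 1 + 1) := (lcs_succ_eq H _).symm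
        _ = N := by rw [hN, show i + j + 1 + 1 = i + (j + 1) + 1 by omega]

end TSAux

namespace TSAux

variable {G : Type u} [Group G]

/-- The generating set of the `k`-th term of the filtration of the tensor square. -/
def Sset (G : Type u) [Group G] (k : ℕ) : Set (TensorSquare G) :=
  {x | ∃ a b : G, a ∈ (⊤ : Subgroup G).lowerCentralSeries (2 * k + 1) ∧
    b ∈ (⊤ : Subgroup G).lowerCentralSeries 1 ∧ x = tm a b}

lemma lcs_le_closure_Sset : ∀ k : ℕ,
    (⊤ : Subgroup (TensorSquare G)).lowerCentralSeries (k + 1) ≤ Subgroup.closure (Sset G k) := by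
  intro k
  induction k with
  | zero =>
    rw [lcs_succ_eq]
    apply Subgroup.commutator_le.mpr
    intro x _ y _
    rw [commutatorElement_def, comm_eq x y]
    exact Subgroup.subset_closure ⟨kap x, kap y, kap_mem x, kap_mem y, rfl⟩
  | succ k ih =>
    rw [lcs_succ_eq]
    apply Subgroup.commutator_le.mpr
    intro x hx y _
    have hcl : Subgroup.closure (Sset G k) ≤
        ((⊤ : Subgroup G).lowerCentralSeries (2 * (k + 1) + 1)).comap kap := by
      apply (Subgroup.closure_le _).mpr
      rintro s ⟨a, b, ha, hb, rfl⟩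
      have h1 : kap (tm a b) = ⁅a, b⁆ := by rw [kap_tm, commutatorElement_def]
      have h2 : ⁅a, b⁆ ∈ ⁅(⊤ : Subgroup G).lowerCentralSeries (2 * k + 1), (⊤ : Subgroup G).lowerCentralSeries 1⁆ :=
        Subgroup.commutator_mem_commutator ha hb
      have h3 := lcs_comm G 1 (2 * k + 1) h2
      rw [show 2 * k + 1 + 1 + 1 = 2 * (k + 1) + 1 by omega] at h3
      simp only [SetLike.mem_coe, Subgroup.mem_comap, h1]
      exact h3
    have hkx : kap x ∈ (⊤ : Subgroup G).lowerCentralSeries (2 * (k + 1) + 1) := hcl (ih hx)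
    rw [commutatorElement_def, comm_eq x y]
    exact Subgroup.subset_closure ⟨kap x, kap y, hkx, kap_mem y, rfl⟩

end TSAux

/-- if `G` has nilpotency class `n`, then the tensor square `G ⊗ G` is
nilpotent of class at most `⌈n/2⌉`. -/
theorem tensorSquare_nilpotencyClass_le_ceil {G : Type u} [Group G] [Group.IsNilpotent G]
    (n : ℕ) (hn : Group.nilpotencyClass G = n) :
    (⊤ : Subgroup (TensorSquare G)).lowerCentralSeries ((n + 1) / 2) = ⊥ := by
  have hbot : (⊤ : Subgroup G).lowerCentralSeries n = ⊥ := by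
    rw [← hn]; exact lowerCentralSeries_nilpotencyClass
  cases n with
  | zero =>
    -- `G` is trivial, hence so is the tensor square
    have htriv : ∀ g : G, g = 1 := by
      intro g
      have : g ∈ (⊤ : Subgroup G).lowerCentralSeries 0 := by rw [lowerCentralSeries_zero]; trivial
      rw [hbot] at this
      exact this
    have hT : ∀ x : TensorSquare G, x = 1 := by
      refine TSAux.tm_induction rfl ?_ ?_ ?_
      · intro g h
        rw [htriv g, TSAux.one_tm]
      · intro x hx; rw [hx, inv_one]
      · intro x y hx hy; rw [hx, hy, mul_one]
    rw [show (0 + 1) / 2 = 0 by norm_num, lowerCentralSeries_zero]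
    apply Subgroup.eq_bot_iff_forall _ |>.mpr
    intro x _
    exact hT x
  | succ m =>
    have hcent : ∀ a ∈ (⊤ : Subgroup G).lowerCentralSeries m, ∀ g : G, a * g = g * a := by
      intro a ha g
      have h1 : ⁅a, g⁆ ∈ (⊤ : Subgroup G).lowerCentralSeries (m + 1) := by
        rw [TSAux.lcs_succ_eq]
        exact Subgroup.commutator_mem_commutator ha (Subgroup.mem_top g)
      rw [hbot] at h1
      exact commutatorElement_eq_one_iff_mul_comm.mp h1
    have hS : ∀ x ∈ TSAux.Sset G (m / 2), x = (1 : TensorSquare G) := by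
      rintro x ⟨a, b, ha, hb, rfl⟩
      have ham : a ∈ (⊤ : Subgroup G).lowerCentralSeries m :=
        lowerCentralSeries_antitone _ (by omega) ha
      have hb' : b ∈ commutator G := by rwa [lowerCentralSeries_one] at hb
      exact TSAux.central_tm (hcent a ham) hb'
    rw [show (m + 1 + 1) / 2 = m / 2 + 1 by omega]
    apply le_bot_iff.mp
    refine (TSAux.lcs_le_closure_Sset (m / 2)).trans ?_
    apply (Subgroup.closure_le _).mpr
    intro x hx
    rw [hS x hx]
    exact Subgroup.one_mem (⊥ : Subgroup (TensorSquare G))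
end

section
/- Let G and H be groups acting compatibly on each other. If the derivative subgroup D_H(G) = ⟨g ·(^h g)⁻¹ : g ∈ G, h ∈ H⟩ is solvable, then the non-abelian tensor product G ⊗ H is solvable. -/
universe u

variable {G H : Type u} [Group G] [Group H]

namespace NATensorAux

variable {G H : Type u} [Group G] [Group H]

theorem tmul_rel1 (c : CompatibleActions G H) (g g' : G) (h : H) :
    tmul c (g * g') h = tmul c (g * g' * g⁻¹) (c.actG g h) * tmul c g h := by
  have hr : (FreeGroup.of (g * g', h) *
      (FreeGroup.of (g * g' * g⁻¹, c.actG g h) * FreeGroup.of (g, h))⁻¹) ∈ tensorRels c :=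
    Or.inl ⟨g, g', h, rfl⟩
  have h1 : PresentedGroup.mk (tensorRels c)
      (FreeGroup.of (g * g', h) *
      (FreeGroup.of (g * g' * g⁻¹, c.actG g h) * FreeGroup.of (g, h))⁻¹) = 1 :=
    (QuotientGroup.eq_one_iff _).mpr (Subgroup.subset_normalClosure hr)
  rw [map_mul, map_inv, map_mul, mul_inv_eq_one] at h1
  exact h1

theorem tmul_rel2 (c : CompatibleActions G H) (g : G) (h h' : H) :
    tmul c g (h * h') = tmul c g h * tmul c (c.actH h g) (h * h' * h⁻¹) := by
  have hr : (FreeGroup.of (g, h * h') *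
      (FreeGroup.of (g, h) * FreeGroup.of (c.actH h g, h * h' * h⁻¹))⁻¹) ∈ tensorRels c :=
    Or.inr ⟨g, h, h', rfl⟩
  have h1 : PresentedGroup.mk (tensorRels c)
      (FreeGroup.of (g, h * h') *
      (FreeGroup.of (g, h) * FreeGroup.of (c.actH h g, h * h' * h⁻¹))⁻¹) = 1 :=
    (QuotientGroup.eq_one_iff _).mpr (Subgroup.subset_normalClosure hr)
  rw [map_mul, map_inv, map_mul, mul_inv_eq_one] at h1
  exact h1

/-- The crossed-module boundary map `φ : G ⊗ H → G`, `g ⊗ h ↦ g (ʰg)⁻¹`. -/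
def phi (c : CompatibleActions G H) : NATensor c →* G :=
  PresentedGroup.toGroup (f := fun p : G × H => p.1 * (c.actH p.2 p.1)⁻¹) (by
    rintro r (⟨g, g', h, rfl⟩ | ⟨g, h, h', rfl⟩)
    · rw [map_mul, map_inv, map_mul, mul_inv_eq_one]
      simp only [FreeGroup.lift_apply_of]
      rw [c.compat_left g (g * g' * g⁻¹) h]
      have e : g⁻¹ * (g * g' * g⁻¹) * g = g' := by group
      rw [e, map_mul (c.actH h) g g']
      group
    · rw [map_mul, map_inv, map_mul, mul_inv_eq_one]
      simp only [FreeGroup.lift_apply_of]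
      have e : c.actH (h * h' * h⁻¹) (c.actH h g) = c.actH (h * h') g := by
        rw [← MulAut.mul_apply, ← map_mul]
        have e' : h * h' * h⁻¹ * h = h * h' := by group
        rw [e']
      rw [e]
      group)

theorem phi_tmul (c : CompatibleActions G H) (g : G) (h : H) :
    phi c (tmul c g h) = g * (c.actH h g)⁻¹ :=
  PresentedGroup.toGroup.of _

/-- The action of `G` on `G ⊗ H` by `g₀ : g ⊗ h ↦ (g₀ g g₀⁻¹) ⊗ (ᵍ⁰h)`. -/
def rho (c : CompatibleActions G H) (g₀ : G) : NATensor c →* NATensor c :=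
  PresentedGroup.toGroup
    (f := fun p : G × H => tmul c (g₀ * p.1 * g₀⁻¹) (c.actG g₀ p.2)) (by
    rintro r (⟨g, g', h, rfl⟩ | ⟨g, h, h', rfl⟩)
    · rw [map_mul, map_inv, map_mul, mul_inv_eq_one]
      simp only [FreeGroup.lift_apply_of]
      have e1 : g₀ * (g * g') * g₀⁻¹ = (g₀ * g * g₀⁻¹) * (g₀ * g' * g₀⁻¹) := by group
      have e2 : g₀ * (g * g' * g⁻¹) * g₀⁻¹ =
          (g₀ * g * g₀⁻¹) * (g₀ * g' * g₀⁻¹) * (g₀ * g * g₀⁻¹)⁻¹ := by group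
      have e3 : c.actG g₀ (c.actG g h) = c.actG (g₀ * g * g₀⁻¹) (c.actG g₀ h) := by
        rw [← MulAut.mul_apply, ← MulAut.mul_apply, ← map_mul, ← map_mul]
        have e' : g₀ * g = g₀ * g * g₀⁻¹ * g₀ := by group
        rw [← e']
      rw [e1, e2, e3]
      exact tmul_rel1 c _ _ _
    · rw [map_mul, map_inv, map_mul, mul_inv_eq_one]
      simp only [FreeGroup.lift_apply_of]
      have e1 : c.actG g₀ (h * h') = c.actG g₀ h * c.actG g₀ h' := map_mul _ _ _
      have e2 : g₀ * c.actH h g * g₀⁻¹ = c.actH (c.actG g₀ h) (g₀ * g * g₀⁻¹) := by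
        rw [c.compat_left]
        have e' : g₀⁻¹ * (g₀ * g * g₀⁻¹) * g₀ = g := by group
        rw [e']
      have e3 : c.actG g₀ (h * h' * h⁻¹) =
          c.actG g₀ h * c.actG g₀ h' * (c.actG g₀ h)⁻¹ := by
        rw [map_mul, map_mul, map_inv]
      rw [e1, e2, e3]
      exact tmul_rel2 c _ _ _)

theorem rho_tmul (c : CompatibleActions G H) (g₀ g : G) (h : H) :
    rho c g₀ (tmul c g h) = tmul c (g₀ * g * g₀⁻¹) (c.actG g₀ h) :=
  PresentedGroup.toGroup.of _

theorem rho_mul (c : CompatibleActions G H) (a b : G) :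
    (rho c a).comp (rho c b) = rho c (a * b) := by
  refine PresentedGroup.ext ?_
  rintro ⟨g, h⟩
  show rho c a (rho c b (tmul c g h)) = rho c (a * b) (tmul c g h)
  rw [rho_tmul, rho_tmul, rho_tmul]
  have e1 : a * (b * g * b⁻¹) * a⁻¹ = a * b * g * (a * b)⁻¹ := by group
  have e2 : c.actG a (c.actG b h) = c.actG (a * b) h := by
    rw [← MulAut.mul_apply, ← map_mul]
  rw [e1, e2]

theorem rho_one (c : CompatibleActions G H) : rho c 1 = MonoidHom.id (NATensor c) := by
  refine PresentedGroup.ext ?_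
  rintro ⟨g, h⟩
  show rho c 1 (tmul c g h) = tmul c g h
  rw [rho_tmul]
  have e1 : (1 : G) * g * (1 : G)⁻¹ = g := by group
  rw [e1, map_one]
  rw [MulAut.one_apply]

/-- The intermediate commutation identity obtained by expanding `(g g') ⊗ (h h')`
in two ways. -/
theorem middle (c : CompatibleActions G H) (g g' : G) (h h' : H) :
    tmul c g h * tmul c (c.actH h g * c.actH h g' * (c.actH h g)⁻¹)
        (c.actG (c.actH h g) (h * h' * h⁻¹)) =
    tmul c (c.actH (c.actG g h) (g * g' * g⁻¹))
        (c.actG g h * c.actG g h' * (c.actG g h)⁻¹) * tmul c g h := by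
  set A := c.actH h g with hA
  set B := c.actH h g' with hB
  set C := c.actG g h with hC
  set D := c.actG g h' with hD
  have w1 : tmul c (g * g') (h * h') =
      tmul c (g * g' * g⁻¹) C * tmul c g h *
        (tmul c (A * B * A⁻¹) (c.actG A (h * h' * h⁻¹)) * tmul c A (h * h' * h⁻¹)) := by
    rw [tmul_rel2 c (g * g') h h', tmul_rel1 c g g' h]
    rw [show c.actH h (g * g') = A * B from map_mul _ _ _]
    rw [tmul_rel1 c A B (h * h' * h⁻¹)]
  have w2 : tmul c (g * g') (h * h') =
      tmul c (g * g' * g⁻¹) C *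
        (tmul c (c.actH C (g * g' * g⁻¹)) (C * D * C⁻¹) *
          (tmul c g h * tmul c A (h * h' * h⁻¹))) := by
    rw [tmul_rel1 c g g' (h * h')]
    rw [show c.actG g (h * h') = C * D from map_mul _ _ _]
    rw [tmul_rel2 c (g * g' * g⁻¹) C D, tmul_rel2 c g h h', ← hA]
    rw [mul_assoc]
  have e := w1.symm.trans w2
  rw [mul_assoc (tmul c (g * g' * g⁻¹) C)] at e
  have e2 := mul_left_cancel e
  rw [← mul_assoc, ← mul_assoc] at e2
  exact mul_right_cancel e2

/-- Conjugation in `G ⊗ H` by a generator is the action of its boundary image. -/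
theorem conj_tmul (c : CompatibleActions G H) (g p : G) (h q : H) :
    tmul c g h * tmul c p q * (tmul c g h)⁻¹ =
    tmul c ((g * (c.actH h g)⁻¹) * p * (g * (c.actH h g)⁻¹)⁻¹)
      (c.actG (g * (c.actH h g)⁻¹) q) := by
  set A := c.actH h g with hA
  have m := middle c g (c.actH h⁻¹ (A⁻¹ * p * A)) h (h⁻¹ * c.actG A⁻¹ q * h)
  have eg : c.actH h (c.actH h⁻¹ (A⁻¹ * p * A)) = A⁻¹ * p * A := by
    rw [← MulAut.mul_apply, ← map_mul, mul_inv_cancel, map_one, MulAut.one_apply]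
  have eh : h * (h⁻¹ * c.actG A⁻¹ q * h) * h⁻¹ = c.actG A⁻¹ q := by group
  rw [eg, eh] at m
  have e1 : A * (A⁻¹ * p * A) * A⁻¹ = p := by group
  have e2 : c.actG A (c.actG A⁻¹ q) = q := by
    rw [← MulAut.mul_apply, ← map_mul, mul_inv_cancel, map_one, MulAut.one_apply]
  rw [e1, e2] at m
  have e3 : c.actH (c.actG g h) (g * c.actH h⁻¹ (A⁻¹ * p * A) * g⁻¹) =
      g * A⁻¹ * p * (g * A⁻¹)⁻¹ := by
    rw [c.compat_left]
    have e' : g⁻¹ * (g * c.actH h⁻¹ (A⁻¹ * p * A) * g⁻¹) * g =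
        c.actH h⁻¹ (A⁻¹ * p * A) := by group
    rw [e', eg]
    group
  have u1 : c.actG g (h⁻¹ * c.actG A⁻¹ q * h) =
      (c.actG g h)⁻¹ * c.actG (g * A⁻¹) q * c.actG g h := by
    rw [map_mul (c.actG g) (h⁻¹ * c.actG A⁻¹ q) h,
      map_mul (c.actG g) h⁻¹ (c.actG A⁻¹ q), map_inv (c.actG g) h]
    rw [← MulAut.mul_apply, ← map_mul]
  have e4 : c.actG g h * c.actG g (h⁻¹ * c.actG A⁻¹ q * h) * (c.actG g h)⁻¹ =
      c.actG (g * A⁻¹) q := by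
    rw [u1]
    group
  rw [e3, e4] at m
  rw [m, mul_inv_cancel_right]

/-- The Peiffer-type identity: conjugation by `x` in `G ⊗ H` is the action of `φ x`. -/
theorem peiffer (c : CompatibleActions G H) (x y : NATensor c) :
    rho c (phi c x) y = x * y * x⁻¹ := by
  let K : Subgroup (NATensor c) :=
    { carrier := {x | ∀ y, rho c (phi c x) y = x * y * x⁻¹}
      one_mem' := by
        intro y
        rw [map_one, rho_one]
        simp
      mul_mem' := by
        intro a b ha hb y
        have h1 : rho c (phi c (a * b)) y = rho c (phi c a) (rho c (phi c b) y) := by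
          rw [map_mul, ← rho_mul]
          rfl
        rw [h1, hb y, ha]
        group
      inv_mem' := by
        intro a ha y
        have h1 : a * rho c (phi c a⁻¹) y * a⁻¹ = y := by
          rw [← ha (rho c (phi c a⁻¹) y), ← MonoidHom.comp_apply, rho_mul, ← map_mul,
            mul_inv_cancel, map_one, rho_one]
          rfl
        have h2 : rho c (phi c a⁻¹) y = a⁻¹ * y * a := by
          calc rho c (phi c a⁻¹) y
              = a⁻¹ * (a * rho c (phi c a⁻¹) y * a⁻¹) * a := by group
            _ = a⁻¹ * y * a := by rw [h1]
        rw [h2]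
        group }
  have hK : ∀ j : G × H, (PresentedGroup.of j : NATensor c) ∈ K := by
    rintro ⟨g, h⟩
    intro y
    show rho c (phi c (tmul c g h)) y = tmul c g h * y * (tmul c g h)⁻¹
    rw [phi_tmul]
    have hhom : rho c (g * (c.actH h g)⁻¹) =
        ((MulAut.conj (tmul c g h)).toMonoidHom : NATensor c →* NATensor c) := by
      refine PresentedGroup.ext ?_
      rintro ⟨p, q⟩
      show rho c (g * (c.actH h g)⁻¹) (tmul c p q) =
        tmul c g h * tmul c p q * (tmul c g h)⁻¹
      rw [rho_tmul, conj_tmul]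
    rw [hhom]
    rfl
  exact PresentedGroup.generated_by (tensorRels c) K hK x y

end NATensorAux


/-- if the derivative subgroup `D_H(G)` is solvable, then `G ⊗ H` is solvable. -/
theorem tensor_solvable_of_deriv_solvable {G H : Type u} [Group G] [Group H]
    (c : CompatibleActions G H) (h : IsSolvable (derivSubgroupG c)) :
    IsSolvable (NATensor c) := by
  classical
  haveI := h
  set φ := NATensorAux.phi c with hφ
  have hmem : ∀ x : NATensor c, φ x ∈ derivSubgroupG c := by
    intro x
    refine PresentedGroup.generated_by (tensorRels c) ((derivSubgroupG c).comap φ) ?_ x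
    rintro ⟨g, hh⟩
    show φ (tmul c g hh) ∈ derivSubgroupG c
    rw [hφ, NATensorAux.phi_tmul]
    exact Subgroup.subset_closure ⟨g, hh, rfl⟩
  set ψ : NATensor c →* ↥(derivSubgroupG c) := φ.codRestrict (derivSubgroupG c) hmem with hψ
  have hker : ∀ x ∈ ψ.ker, ∀ y : NATensor c, x * y = y * x := by
    intro x hx y
    have hx1 : φ x = 1 := congrArg Subtype.val (MonoidHom.mem_ker.mp hx)
    have hp := NATensorAux.peiffer c x y
    rw [hx1, NATensorAux.rho_one] at hp
    have : y = x * y * x⁻¹ := hp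
    calc x * y = (x * y * x⁻¹) * x := by group
    _ = y * x := by rw [← this]
  haveI : IsMulCommutative ψ.ker :=
    ⟨⟨fun a b => Subtype.ext (hker a.1 a.2 b.1)⟩⟩
  haveI hS : IsSolvable ψ.ker := Group.isSolvable_of_comm (mul_comm' (M := ψ.ker))
  exact solvable_of_ker_le_range ψ.ker.subtype ψ (by rw [Subgroup.range_subtype]) (hG' := hS) (hG'' := h)
end

section
/- Let G and H be groups acting compatibly on each other. If D_H(G) is nilpotent of class c, then G ⊗ H is nilpotent of class at most c + 1. -/
universe u

variable {G H : Type u} [Group G] [Group H]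

namespace NATaux

variable {G H : Type u} [Group G] [Group H]

lemma mk_rel_eq_one (c : CompatibleActions G H) {r : FreeGroup (G × H)}
    (hr : r ∈ tensorRels c) : PresentedGroup.mk (tensorRels c) r = 1 :=
  (QuotientGroup.eq_one_iff r).mpr (Subgroup.subset_normalClosure hr)

lemma tmul_rel1 (c : CompatibleActions G H) (g g' : G) (h : H) :
    tmul c (g * g') h = tmul c (g * g' * g⁻¹) (c.actG g h) * tmul c g h := by
  have := mk_rel_eq_one c (Set.mem_union_left _ ⟨g, g', h, rfl⟩)
  rw [map_mul, map_inv, map_mul, mul_inv_eq_one] at this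
  exact this

lemma tmul_rel2 (c : CompatibleActions G H) (g : G) (h h' : H) :
    tmul c g (h * h') = tmul c g h * tmul c (c.actH h g) (h * h' * h⁻¹) := by
  have := mk_rel_eq_one c (Set.mem_union_right _ ⟨g, h, h', rfl⟩)
  rw [map_mul, map_inv, map_mul, mul_inv_eq_one] at this
  exact this

end NATaux
namespace NATaux

variable {G H : Type u} [Group G] [Group H]

lemma tmul_one_left (c : CompatibleActions G H) (k : H) : tmul c 1 k = 1 := by
  have := tmul_rel1 c 1 1 k
  simp only [mul_one, one_mul, inv_one, map_one, MulAut.one_apply] at this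
  exact mul_eq_left.mp this.symm

lemma tmul_inv (c : CompatibleActions G H) (a : G) (k : H) :
    (tmul c a k)⁻¹ = tmul c a⁻¹ (c.actG a k) := by
  have := tmul_rel1 c a a⁻¹ k
  rw [mul_inv_cancel, tmul_one_left, one_mul] at this
  exact (eq_inv_of_mul_eq_one_left this.symm).symm

-- D1 : right quotient with the same second component
lemma tmul_div1 (c : CompatibleActions G H) (a b : G) (k : H) :
    tmul c b k * (tmul c a k)⁻¹ = tmul c (b * a⁻¹) (c.actG a k) := by
  have := tmul_rel1 c a (a⁻¹ * b) k
  rw [mul_inv_cancel_left] at this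
  rw [this, mul_inv_cancel_right]

end NATaux
namespace NATaux

variable {G H : Type u} [Group G] [Group H]

/-- Lift a map satisfying the tensor relations to a homomorphism on `NATensor c`. -/
def liftT {T' : Type*} [Group T'] (c : CompatibleActions G H) (p : G × H → T')
    (h1 : ∀ g g' h, p (g * g', h) = p (g * g' * g⁻¹, c.actG g h) * p (g, h))
    (h2 : ∀ g h h', p (g, h * h') = p (g, h) * p (c.actH h g, h * h' * h⁻¹)) :
    NATensor c →* T' :=
  PresentedGroup.toGroup (f := p) (by
    rintro r (⟨g, g', h, rfl⟩ | ⟨g, h, h', rfl⟩) <;>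
      simp only [map_mul, map_inv, FreeGroup.lift_apply_of, mul_inv_eq_one]
    · exact h1 g g' h
    · exact h2 g h h')

@[simp] lemma liftT_tmul {T' : Type*} [Group T'] (c : CompatibleActions G H) (p : G × H → T')
    (h1) (h2) (g : G) (h : H) : liftT c p h1 h2 (tmul c g h) = p (g, h) :=
  PresentedGroup.toGroup.of _

end NATaux
namespace NATaux

variable {G H : Type u} [Group G] [Group H]

lemma phi_mem (c : CompatibleActions G H) (g : G) (h : H) :
    g * (c.actH h g)⁻¹ ∈ derivSubgroupG c :=
  Subgroup.subset_closure ⟨g, h, rfl⟩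

lemma phi_rel1 (c : CompatibleActions G H) (g g' : G) (h : H) :
    (g * g') * (c.actH h (g * g'))⁻¹ =
      ((g * g' * g⁻¹) * (c.actH (c.actG g h) (g * g' * g⁻¹))⁻¹) * (g * (c.actH h g)⁻¹) := by
  rw [c.compat_left]
  have e0 : g⁻¹ * (g * g' * g⁻¹) * g = g' := by group
  rw [e0, map_mul]
  group

lemma phi_rel2 (c : CompatibleActions G H) (g : G) (h h' : H) :
    g * (c.actH (h * h') g)⁻¹ =
      (g * (c.actH h g)⁻¹) * (c.actH h g * (c.actH (h * h' * h⁻¹) (c.actH h g))⁻¹) := by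
  simp only [map_mul, map_inv, MulAut.mul_apply, MulAut.inv_def, MulEquiv.symm_apply_apply]
  group

/-- The crossed-module map `G ⊗ H → D_H(G)`, `g ⊗ h ↦ g (ʰg)⁻¹`. -/
def phiD (c : CompatibleActions G H) : NATensor c →* derivSubgroupG c :=
  liftT c (fun x => ⟨x.1 * (c.actH x.2 x.1)⁻¹, phi_mem c x.1 x.2⟩)
    (fun g g' h => Subtype.ext (phi_rel1 c g g' h))
    (fun g h h' => Subtype.ext (phi_rel2 c g h h'))

@[simp] lemma phiD_tmul (c : CompatibleActions G H) (g : G) (h : H) :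
    (phiD c (tmul c g h) : G) = g * (c.actH h g)⁻¹ := by
  simp [phiD]

end NATaux
namespace NATaux

variable {G H : Type u} [Group G] [Group H]

lemma act_rel1 (c : CompatibleActions G H) (x g g' : G) (h : H) :
    tmul c (x * (g * g') * x⁻¹) (c.actG x h) =
      tmul c (x * (g * g' * g⁻¹) * x⁻¹) (c.actG x (c.actG g h)) *
        tmul c (x * g * x⁻¹) (c.actG x h) := by
  have := tmul_rel1 c (x * g * x⁻¹) (x * g' * x⁻¹) (c.actG x h)
  have e1 : (x * g * x⁻¹) * (x * g' * x⁻¹) = x * (g * g') * x⁻¹ := by group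
  rw [e1] at this
  have e2 : x * (g * g') * x⁻¹ * (x * g * x⁻¹)⁻¹ = x * (g * g' * g⁻¹) * x⁻¹ := by group
  rw [e2] at this
  have e3 : c.actG (x * g * x⁻¹) (c.actG x h) = c.actG x (c.actG g h) := by
    simp only [map_mul, map_inv, MulAut.mul_apply, MulAut.inv_def, MulEquiv.symm_apply_apply]
  rw [e3] at this
  exact this

lemma act_rel2 (c : CompatibleActions G H) (x g : G) (h h' : H) :
    tmul c (x * g * x⁻¹) (c.actG x (h * h')) =
      tmul c (x * g * x⁻¹) (c.actG x h) *
        tmul c (x * (c.actH h g) * x⁻¹) (c.actG x (h * h' * h⁻¹)) := by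
  have := tmul_rel2 c (x * g * x⁻¹) (c.actG x h) (c.actG x h')
  have e1 : c.actG x h * c.actG x h' = c.actG x (h * h') := (map_mul _ _ _).symm
  rw [e1] at this
  have e2 : c.actH (c.actG x h) (x * g * x⁻¹) = x * (c.actH h g) * x⁻¹ := by
    rw [c.compat_left]
    have : x⁻¹ * (x * g * x⁻¹) * x = g := by group
    rw [this]
  have e3 : c.actG x (h * h') * (c.actG x h)⁻¹ = c.actG x (h * h' * h⁻¹) := by
    simp only [map_mul, map_inv]
  rw [e2, e3] at this
  exact this

/-- The action of `G` on `G ⊗ H` as an endomorphism. -/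
def Aend (c : CompatibleActions G H) (x : G) : NATensor c →* NATensor c :=
  liftT c (fun p => tmul c (x * p.1 * x⁻¹) (c.actG x p.2))
    (fun g g' h => act_rel1 c x g g' h)
    (fun g h h' => act_rel2 c x g h h')

@[simp] lemma Aend_tmul (c : CompatibleActions G H) (x : G) (g : G) (h : H) :
    Aend c x (tmul c g h) = tmul c (x * g * x⁻¹) (c.actG x h) := by
  simp [Aend]

/-- Homomorphisms out of `NATensor c` agree if they agree on generators. -/
lemma hom_ext {T' : Type*} [Group T'] {c : CompatibleActions G H}
    {f f' : NATensor c →* T'} (hx : ∀ g h, f (tmul c g h) = f' (tmul c g h)) : f = f' :=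
  PresentedGroup.ext (fun ⟨g, h⟩ => hx g h)

end NATaux
namespace NATaux

variable {G H : Type u} [Group G] [Group H]

/-- The fundamental conjugation identity in `G ⊗ H`. -/
lemma star (c : CompatibleActions G H) (g u : G) (h v : H) :
    tmul c g h * tmul c (c.actH h (g * u * g⁻¹)) (h * c.actG g v * h⁻¹)
      = tmul c (g * c.actH h u * g⁻¹) (c.actG g (h * v * h⁻¹)) * tmul c g h := by
  have stepA : tmul c (c.actH h (g * u * g⁻¹)) (h * c.actG g v * h⁻¹)
      = tmul c (c.actH h (g * u)) (h * v * h⁻¹) * (tmul c (c.actH h g) (h * v * h⁻¹))⁻¹ := by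
    have hrel := tmul_rel1 c (c.actH h g) (c.actH h u) (h * v * h⁻¹)
    have e2 : c.actH h g * c.actH h u * (c.actH h g)⁻¹ = c.actH h (g * u * g⁻¹) := by
      rw [map_mul, map_mul, map_inv]
    have e3 : c.actG (c.actH h g) (h * v * h⁻¹) = h * c.actG g v * h⁻¹ := by
      rw [c.compat_right]
      have e : h⁻¹ * (h * v * h⁻¹) * h = v := by group
      rw [e]
    rw [e2, e3] at hrel
    have e1 : c.actH h g * c.actH h u = c.actH h (g * u) := (map_mul _ _ _).symm
    rw [e1] at hrel
    rw [hrel, mul_inv_cancel_right]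
  have stepB : tmul c (c.actH h (g * u)) (h * v * h⁻¹)
      = (tmul c (g * u) h)⁻¹ * tmul c (g * u) (h * v) := by
    rw [tmul_rel2 c (g * u) h v, inv_mul_cancel_left]
  have stepC : (tmul c (c.actH h g) (h * v * h⁻¹))⁻¹
      = (tmul c g (h * v))⁻¹ * tmul c g h := by
    rw [tmul_rel2 c g h v]
    group
  have stepD : tmul c g h * (tmul c (g * u) h)⁻¹
      = tmul c (g * u⁻¹ * g⁻¹) (c.actG (g * u) h) := by
    rw [tmul_div1 c (g * u) g h]
    congr 1
    group
  have stepE : tmul c (g * u) (h * v) * (tmul c g (h * v))⁻¹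
      = tmul c (g * u * g⁻¹) (c.actG g (h * v)) := tmul_div1 c g (g * u) (h * v)
  have stepG : tmul c (c.actH h u) (h * v * h⁻¹)
      = tmul c u⁻¹ (c.actG u h) * tmul c u (h * v) := by
    rw [← tmul_inv, tmul_rel2 c u h v, inv_mul_cancel_left]
  have eGU : c.actG g (c.actG u h) = c.actG (g * u) h := by rw [map_mul]; rfl
  have hR : tmul c (g * c.actH h u * g⁻¹) (c.actG g (h * v * h⁻¹))
      = tmul c g h * (tmul c (g * u) h)⁻¹ * (tmul c (g * u) (h * v) * (tmul c g (h * v))⁻¹) := by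
    rw [← Aend_tmul c g (c.actH h u) (h * v * h⁻¹), stepG, map_mul, Aend_tmul, Aend_tmul,
      eGU, ← stepD, ← stepE]
  rw [stepA, stepB, stepC, hR]
  group

end NATaux
namespace NATaux

variable {G H : Type u} [Group G] [Group H]

lemma Aend_comp (c : CompatibleActions G H) (x y : G) :
    (Aend c x).comp (Aend c y) = Aend c (x * y) :=
  hom_ext (fun g h => by
    rw [MonoidHom.comp_apply, Aend_tmul, Aend_tmul, Aend_tmul]
    have e1 : x * (y * g * y⁻¹) * x⁻¹ = (x * y) * g * (x * y)⁻¹ := by group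
    have e2 : c.actG x (c.actG y h) = c.actG (x * y) h := by rw [map_mul]; rfl
    rw [e1, e2])

lemma Aend_id (c : CompatibleActions G H) :
    Aend c 1 = MonoidHom.id (NATensor c) :=
  hom_ext (fun g h => by simp)

/-- The action of `G` on `G ⊗ H` as an automorphism. -/
def Aaut (c : CompatibleActions G H) (x : G) : MulAut (NATensor c) where
  toFun := Aend c x
  invFun := Aend c x⁻¹
  left_inv t := by
    have e : (Aend c x⁻¹).comp (Aend c x) = MonoidHom.id (NATensor c) := by
      rw [Aend_comp, inv_mul_cancel, Aend_id]
    exact DFunLike.congr_fun e t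
  right_inv t := by
    have e : (Aend c x).comp (Aend c x⁻¹) = MonoidHom.id (NATensor c) := by
      rw [Aend_comp, mul_inv_cancel, Aend_id]
    exact DFunLike.congr_fun e t
  map_mul' := (Aend c x).map_mul

@[simp] lemma Aaut_tmul (c : CompatibleActions G H) (x : G) (g : G) (h : H) :
    Aaut c x (tmul c g h) = tmul c (x * g * x⁻¹) (c.actG x h) :=
  Aend_tmul c x g h

/-- The action of `G` on `G ⊗ H` as a homomorphism into automorphisms. -/
def Ahom (c : CompatibleActions G H) : G →* MulAut (NATensor c) where
  toFun := Aaut c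
  map_one' := MulEquiv.toMonoidHom_injective (hom_ext (fun g h => by
    show Aaut c 1 (tmul c g h) = tmul c g h
    simp))
  map_mul' x y := MulEquiv.toMonoidHom_injective (hom_ext (fun g h => by
    show Aaut c (x * y) (tmul c g h) = Aaut c x (Aaut c y (tmul c g h))
    rw [Aaut_tmul, Aaut_tmul, Aaut_tmul]
    have e1 : x * (y * g * y⁻¹) * x⁻¹ = (x * y) * g * (x * y)⁻¹ := by group
    have e2 : c.actG x (c.actG y h) = c.actG (x * y) h := by rw [map_mul]; rfl
    rw [e1, e2]))

lemma conj_tmul (c : CompatibleActions G H) (g u : G) (h v : H) :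
    tmul c g h * tmul c u v
      = tmul c ((g * (c.actH h g)⁻¹) * u * (g * (c.actH h g)⁻¹)⁻¹)
          (c.actG (g * (c.actH h g)⁻¹) v) * tmul c g h := by
  have hstar := star c g (g⁻¹ * (c.actH h⁻¹ u) * g) h (c.actG g⁻¹ (h⁻¹ * v * h))
  have e1 : c.actH h (g * (g⁻¹ * (c.actH h⁻¹ u) * g) * g⁻¹) = u := by
    have e : g * (g⁻¹ * (c.actH h⁻¹ u) * g) * g⁻¹ = c.actH h⁻¹ u := by group
    rw [e, map_inv, MulAut.inv_def, MulEquiv.apply_symm_apply]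
  have e2 : h * c.actG g (c.actG g⁻¹ (h⁻¹ * v * h)) * h⁻¹ = v := by
    have e : c.actG g (c.actG g⁻¹ (h⁻¹ * v * h)) = h⁻¹ * v * h := by
      rw [map_inv, MulAut.inv_def, MulEquiv.apply_symm_apply]
    rw [e]; group
  have e3 : g * c.actH h (g⁻¹ * (c.actH h⁻¹ u) * g) * g⁻¹
      = (g * (c.actH h g)⁻¹) * u * (g * (c.actH h g)⁻¹)⁻¹ := by
    rw [map_mul, map_mul, map_inv, map_inv, MulAut.inv_def, MulEquiv.apply_symm_apply]
    group
  have e4 : c.actG g (h * c.actG g⁻¹ (h⁻¹ * v * h) * h⁻¹)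
      = c.actG (g * (c.actH h g)⁻¹) v := by
    have e : h * c.actG g⁻¹ (h⁻¹ * v * h) * h⁻¹ = c.actG ((c.actH h g)⁻¹) v := by
      rw [← (c.compat_right g⁻¹ h v), ← map_inv]
    rw [e, map_mul, map_inv]
    rfl
  rw [e1, e2, e3, e4] at hstar
  exact hstar

/-- The crossed-module/Peiffer identity: conjugation equals the action through `phiD`. -/
lemma conj_eq (c : CompatibleActions G H) :
    MulAut.conj = (Ahom c).comp ((derivSubgroupG c).subtype.comp (phiD c)) := by
  apply hom_ext
  intro g h
  rw [MonoidHom.comp_apply, MonoidHom.comp_apply]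
  have e : ((derivSubgroupG c).subtype) (phiD c (tmul c g h)) = g * (c.actH h g)⁻¹ := by
    simp [phiD]
  rw [e]
  apply MulEquiv.toMonoidHom_injective
  apply hom_ext
  intro u v
  show tmul c g h * tmul c u v * (tmul c g h)⁻¹ = Aaut c (g * (c.actH h g)⁻¹) (tmul c u v)
  rw [Aaut_tmul, conj_tmul c g u h v, mul_inv_cancel_right]

lemma ker_le_center (c : CompatibleActions G H) :
    (phiD c).ker ≤ Subgroup.center (NATensor c) := by
  intro t ht
  rw [MonoidHom.mem_ker] at ht
  rw [Subgroup.mem_center_iff]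
  intro x
  have h1 : MulAut.conj t = (Ahom c) (((derivSubgroupG c).subtype.comp (phiD c)) t) :=
    DFunLike.congr_fun (conj_eq c) t
  rw [MonoidHom.comp_apply, ht, map_one, map_one] at h1
  have h2 : t * x * t⁻¹ = x := by
    have h3 := DFunLike.congr_fun h1 x
    simpa [MulAut.conj_apply] using h3
  calc x * t = (t * x * t⁻¹) * t := by rw [h2]
    _ = t * x := by group

end NATaux
/-- if `D_H(G)` is nilpotent of class `m`, then `G ⊗ H` is nilpotent of
class at most `m + 1`. -/
theorem tensor_nilpotent_of_deriv_nilpotent {G H : Type u} [Group G] [Group H]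
    (c : CompatibleActions G H) [Group.IsNilpotent (derivSubgroupG c)] (m : ℕ)
    (hm : Group.nilpotencyClass (derivSubgroupG c) = m) :
    (⊤ : Subgroup (NATensor c)).lowerCentralSeries (m + 1) = ⊥ := by
  have hb : (⊤ : Subgroup (derivSubgroupG c)).lowerCentralSeries m = ⊥ := by
    rw [← hm]; exact Subgroup.lowerCentralSeries_nilpotencyClass
  have h1 : Subgroup.map (NATaux.phiD c) ((⊤ : Subgroup (NATensor c)).lowerCentralSeries m) = ⊥ :=
    le_bot_iff.mp (hb ▸ Subgroup.lowerCentralSeries.map (NATaux.phiD c) m)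
  have h2 : (⊤ : Subgroup (NATensor c)).lowerCentralSeries m ≤ (NATaux.phiD c).ker :=
    (Subgroup.map_eq_bot_iff _).mp h1
  exact Subgroup.lowerCentralSeries_succ_eq_bot ⊤ (h2.trans (NATaux.ker_le_center c))
end

section
/- If G is a metabelian group, then its tensor square G ⊗ G is metabelian. -/
universe u

variable {G H : Type u} [Group G] [Group H]

namespace TSq

variable {G : Type u} [Group G]

local notation "𝒸" => conjActions G
local notation "𝕋" => TensorSquare G

lemma tmul_rel1 (g g' h : G) :
    tmul 𝒸 (g * g') h = tmul 𝒸 (g * g' * g⁻¹) (g * h * g⁻¹) * tmul 𝒸 g h := by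
  have hr : (FreeGroup.of (g * g', h) *
      (FreeGroup.of (g * g' * g⁻¹, (𝒸).actG g h) * FreeGroup.of (g, h))⁻¹)
      ∈ tensorRels 𝒸 := Or.inl ⟨g, g', h, rfl⟩
  have h1 : PresentedGroup.mk (tensorRels 𝒸) (FreeGroup.of (g * g', h) *
      (FreeGroup.of (g * g' * g⁻¹, (𝒸).actG g h) * FreeGroup.of (g, h))⁻¹) = 1 := by
    exact (QuotientGroup.eq_one_iff _).2 (Subgroup.subset_normalClosure hr)
  rw [map_mul, map_inv, map_mul, mul_inv_eq_one] at h1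
  exact h1

lemma tmul_rel2 (g h h' : G) :
    tmul 𝒸 g (h * h') = tmul 𝒸 g h * tmul 𝒸 (h * g * h⁻¹) (h * h' * h⁻¹) := by
  have hr : (FreeGroup.of (g, h * h') *
      (FreeGroup.of (g, h) * FreeGroup.of ((𝒸).actH h g, h * h' * h⁻¹))⁻¹)
      ∈ tensorRels 𝒸 := Or.inr ⟨g, h, h', rfl⟩
  have h1 : PresentedGroup.mk (tensorRels 𝒸) (FreeGroup.of (g, h * h') *
      (FreeGroup.of (g, h) * FreeGroup.of ((𝒸).actH h g, h * h' * h⁻¹))⁻¹) = 1 := by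
    exact (QuotientGroup.eq_one_iff _).2 (Subgroup.subset_normalClosure hr)
  rw [map_mul, map_inv, map_mul, mul_inv_eq_one] at h1
  exact h1

/-- The commutator map `κ : G ⊗ G → G`. -/
@[simp] lemma conj_actG (g h : G) : (conjActions G).actG g h = g * h * g⁻¹ := rfl
@[simp] lemma conj_actH (g h : G) : (conjActions G).actH g h = g * h * g⁻¹ := rfl

def kappa : TensorSquare G →* G :=
  PresentedGroup.toGroup (f := fun p : G × G => p.1 * p.2 * p.1⁻¹ * p.2⁻¹) (by
    rintro r (⟨g, g', h, rfl⟩ | ⟨g, h, h', rfl⟩) <;>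
      simp only [map_mul, map_inv, FreeGroup.lift_apply_of, conj_actG, conj_actH] <;>
      group)

@[simp] lemma kappa_tmul (g h : G) :
    kappa (tmul 𝒸 g h) = g * h * g⁻¹ * h⁻¹ :=
  PresentedGroup.toGroup.of _

/-- Diagonal conjugation action of `G` on its tensor square, as a hom for each `g`. -/
def muHom (g : G) : TensorSquare G →* TensorSquare G :=
  PresentedGroup.toGroup
    (f := fun p : G × G => tmul 𝒸 (g * p.1 * g⁻¹) (g * p.2 * g⁻¹)) (by
    rintro r (⟨a, b, c, rfl⟩ | ⟨a, b, c, rfl⟩) <;>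
        simp only [map_mul, map_inv, FreeGroup.lift_apply_of, conj_actG, conj_actH] <;>
        rw [mul_inv_eq_one]
    · have h := tmul_rel1 (g * a * g⁻¹) (g * b * g⁻¹) (g * c * g⁻¹)
      convert h using 2 <;> group
    · have h := tmul_rel2 (g * a * g⁻¹) (g * b * g⁻¹) (g * c * g⁻¹)
      convert h using 2 <;> group)

@[simp] lemma muHom_tmul (g a b : G) :
    muHom g (tmul 𝒸 a b) = tmul 𝒸 (g * a * g⁻¹) (g * b * g⁻¹) :=
  PresentedGroup.toGroup.of _

/-- `tmul` with its type ascribed to `TensorSquare G`. -/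
def tm (g h : G) : TensorSquare G := tmul (conjActions G) g h

lemma tm_rel1 (g g' h : G) :
    tm (g * g') h = tm (g * g' * g⁻¹) (g * h * g⁻¹) * tm g h := tmul_rel1 g g' h

lemma tm_rel2 (g h h' : G) :
    tm g (h * h') = tm g h * tm (h * g * h⁻¹) (h * h' * h⁻¹) := tmul_rel2 g h h'

@[simp] lemma kappa_tm (g h : G) : kappa (tm g h) = g * h * g⁻¹ * h⁻¹ := kappa_tmul g h

@[simp] lemma muHom_tm (g a b : G) :
    muHom g (tm a b) = tm (g * a * g⁻¹) (g * b * g⁻¹) := muHom_tmul g a b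

lemma muHom_muHom (g₁ g₂ : G) (x : 𝕋) :
    muHom g₁ (muHom g₂ x) = muHom (g₁ * g₂) x := by
  have : (muHom g₁).comp (muHom g₂) = (muHom (g₁ * g₂) : 𝕋 →* 𝕋) := by
    apply PresentedGroup.ext
    rintro ⟨a, b⟩
    show muHom g₁ (muHom g₂ (tmul 𝒸 a b)) = muHom (g₁ * g₂) (tmul 𝒸 a b)
    simp only [muHom_tmul]
    congr 1 <;> group
  exact DFunLike.congr_fun this x

lemma muHom_one (x : 𝕋) : muHom (1 : G) x = x := by
  have : (muHom 1 : 𝕋 →* 𝕋) = MonoidHom.id 𝕋 := by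
    apply PresentedGroup.ext
    rintro ⟨a, b⟩
    show muHom 1 (tmul 𝒸 a b) = tmul 𝒸 a b
    simp
    rfl
  exact DFunLike.congr_fun this x


/-- Diagonal conjugation as a `MulAut`-valued homomorphism. -/
def muAut : G →* MulAut 𝕋 where
  toFun g :=
    { toFun := muHom g
      invFun := muHom g⁻¹
      left_inv := fun x => by rw [muHom_muHom, inv_mul_cancel, muHom_one]
      right_inv := fun x => by rw [muHom_muHom, mul_inv_cancel, muHom_one]
      map_mul' := map_mul (muHom g) }
  map_one' := by ext x; exact muHom_one x
  map_mul' g₁ g₂ := by ext x; exact (muHom_muHom g₁ g₂ x).symm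

lemma muAut_apply (g : G) (x : 𝕋) : muAut g x = muHom g x := rfl

/-- The key identity on generators, from expanding `(g*a) ⊗ (h*b)` with the
two defining relations in both orders. -/
lemma key_gen (g h a b : G) :
    muHom g (muHom h (tm a b)) * tm g h = tm g h * muHom h (muHom g (tm a b)) := by
  have h1 := tm_rel1 g a (h * b)
  rw [show g * (h * b) * g⁻¹ = (g * h * g⁻¹) * (g * b * g⁻¹) by group] at h1
  rw [tm_rel2 (g * a * g⁻¹) (g * h * g⁻¹) (g * b * g⁻¹), tm_rel2 g h b] at h1
  have h2 := tm_rel2 (g * a) h b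
  rw [show h * (g * a) * h⁻¹ = (h * g * h⁻¹) * (h * a * h⁻¹) by group] at h2
  rw [tm_rel1 (h * g * h⁻¹) (h * a * h⁻¹) (h * b * h⁻¹), tm_rel1 g a h] at h2
  rw [show (g * h * g⁻¹) * (g * a * g⁻¹) * (g * h * g⁻¹)⁻¹ = g * (h * a * h⁻¹) * g⁻¹ by group,
      show (g * h * g⁻¹) * (g * b * g⁻¹) * (g * h * g⁻¹)⁻¹ = g * (h * b * h⁻¹) * g⁻¹ by group]
    at h1
  rw [show (h * g * h⁻¹) * (h * a * h⁻¹) * (h * g * h⁻¹)⁻¹ = h * (g * a * g⁻¹) * h⁻¹ by group,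
      show (h * g * h⁻¹) * (h * b * h⁻¹) * (h * g * h⁻¹)⁻¹ = h * (g * b * g⁻¹) * h⁻¹ by group]
    at h2
  have E := h1.symm.trans h2
  simp only [muHom_tm]
  set A := tm (g * a * g⁻¹) (g * h * g⁻¹) with hA
  set t := tm g h with ht
  set X := tm (g * (h * a * h⁻¹) * g⁻¹) (g * (h * b * h⁻¹) * g⁻¹) with hX
  set X' := tm (h * (g * a * g⁻¹) * h⁻¹) (h * (g * b * g⁻¹) * h⁻¹) with hX'
  set Y := tm (h * g * h⁻¹) (h * b * h⁻¹) with hY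
  have E3 : A * (X * t) * Y = A * (t * X') * Y := by
    calc A * (X * t) * Y = A * X * (t * Y) := by group
      _ = A * t * (X' * Y) := E
      _ = A * (t * X') * Y := by group
  exact mul_left_cancel (mul_right_cancel E3)

lemma key_all (g h : G) (x : 𝕋) :
    muHom g (muHom h x) * tm g h = tm g h * muHom h (muHom g x) := by
  have hcomp :
      ((MulAut.conj ((tm g h)⁻¹)).toMonoidHom.comp ((muHom g).comp (muHom h)))
        = (muHom h).comp (muHom g) := by
    apply PresentedGroup.ext
    rintro ⟨a, b⟩
    show (tm g h)⁻¹ * (muHom g (muHom h (tm a b))) * (tm g h)⁻¹⁻¹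
        = muHom h (muHom g (tm a b))
    rw [inv_inv, mul_assoc, key_gen g h a b]
    group
  have hx : (tm g h)⁻¹ * (muHom g (muHom h x)) * (tm g h)⁻¹⁻¹
      = muHom h (muHom g x) := DFunLike.congr_fun hcomp x
  rw [inv_inv] at hx
  rw [← hx]
  group

lemma conj_tm (g h : G) (z : 𝕋) :
    tm g h * z * (tm g h)⁻¹ = muHom (g * h * g⁻¹ * h⁻¹) z := by
  have E := key_all g h (muHom h⁻¹ (muHom g⁻¹ (muHom (g * h * g⁻¹ * h⁻¹) z)))
  simp only [muHom_muHom] at E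
  rw [show g * (h * (h⁻¹ * (g⁻¹ * (g * h * g⁻¹ * h⁻¹)))) = g * h * g⁻¹ * h⁻¹ by group] at E
  rw [show h * (g * (h⁻¹ * (g⁻¹ * (g * h * g⁻¹ * h⁻¹)))) = 1 by group, muHom_one] at E
  rw [← E]
  group

/-- Conjugation in the tensor square is given by the image under `κ`. -/
lemma conj_eq (t x : 𝕋) : t * x * t⁻¹ = muHom (kappa t) x := by
  have hcomp : (MulAut.conj : 𝕋 →* MulAut 𝕋) = muAut.comp kappa := by
    apply PresentedGroup.ext
    rintro ⟨g, h⟩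
    refine MulEquiv.ext fun z => ?_
    show tm g h * z * (tm g h)⁻¹ = muHom (kappa (tm g h)) z
    rw [kappa_tm]
    exact conj_tm g h z
  have ht := DFunLike.congr_fun hcomp t
  calc t * x * t⁻¹ = MulAut.conj t x := rfl
    _ = (muAut.comp kappa) t x := by rw [ht]
    _ = muHom (kappa t) x := rfl

end TSq

/-- the tensor square of a metabelian group is metabelian. -/
theorem tensorSquare_metabelian {G : Type u} [Group G]
    (h : derivedSeries G 2 = ⊥) : derivedSeries (TensorSquare G) 2 = ⊥ := by
  have hrange : (TSq.kappa : TensorSquare G →* G).range ≤ commutator G := by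
    rintro y ⟨t, rfl⟩
    refine PresentedGroup.generated_by _ ((commutator G).comap TSq.kappa) ?_ t
    rintro ⟨g, h⟩
    show TSq.kappa (TSq.tm g h) ∈ commutator G
    rw [TSq.kappa_tm]
    exact Subgroup.commutator_mem_commutator (Subgroup.mem_top g) (Subgroup.mem_top h)
  have hker : ∀ x ∈ derivedSeries (TensorSquare G) 1, TSq.kappa x = 1 := by
    intro x hx
    have h1 : Subgroup.map TSq.kappa (derivedSeries (TensorSquare G) 1) ≤ ⊥ := by
      rw [derivedSeries_succ, derivedSeries_zero, Subgroup.map_commutator]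
      calc ⁅Subgroup.map TSq.kappa ⊤, Subgroup.map TSq.kappa ⊤⁆
          ≤ ⁅commutator G, commutator G⁆ := by
            apply Subgroup.commutator_mono <;>
              simpa [← MonoidHom.range_eq_map] using hrange
        _ = derivedSeries G 2 := by
            rw [show (2 : ℕ) = 1 + 1 from rfl, derivedSeries_succ, derivedSeries_one]
        _ = ⊥ := h
    simpa using h1 (Subgroup.mem_map_of_mem _ hx)
  rw [show (2 : ℕ) = 1 + 1 from rfl, derivedSeries_succ, eq_bot_iff,
    Subgroup.commutator_le]
  intro x hx y hy
  have hc : x * y * x⁻¹ = y := by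
    rw [TSq.conj_eq, hker x hx, TSq.muHom_one]
  simp [commutatorElement_def, hc]
end

section
/- Let G belong to the class C of groups that are either an extension of a finite group by a finitely generated non-abelian free group, or an extension of a finitely generated non-abelian free group by a finite group. If N is an abelian normal subgroup of G, then N is finite and G/N again belongs to C. -/
universe u

variable {G H : Type u} [Group G] [Group H]

/-- A group is supersolvable if it has a finite chain of subgroups, each normal in the
whole group, reaching from `⊥` to `⊤`, with all successive factors cyclic. -/
def IsSupersolvable (G : Type u) [Group G] : Prop :=
  ∃ (n : ℕ) (s : ℕ → Subgroup G), s 0 = ⊥ ∧ s n = ⊤ ∧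
    (∀ i, s i ≤ s (i + 1)) ∧ (∀ i, (s i).Normal) ∧
    ∀ i, ∃ x ∈ s (i + 1), ∀ y ∈ s (i + 1), ∃ k : ℤ, (x ^ k)⁻¹ * y ∈ s i

/-- A group is Noetherian if all of its subgroups are finitely generated. -/
def IsNoetherianGroup (G : Type u) [Group G] : Prop :=
  ∀ K : Subgroup G, K.FG

/-- A group is solvable-by-finite if it has a solvable normal subgroup of finite index. -/
def SolvableByFinite (G : Type u) [Group G] : Prop :=
  ∃ S : Subgroup G, S.Normal ∧ IsSolvable S ∧ Finite (G ⧸ S)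

/-- A group is nilpotent-by-finite if it has a nilpotent normal subgroup of finite index. -/
def NilpotentByFinite (G : Type u) [Group G] : Prop :=
  ∃ S : Subgroup G, S.Normal ∧ Group.IsNilpotent S ∧ Finite (G ⧸ S)

/-- The class `𝒞` of groups which are an extension of a finite group by a finitely
generated non-abelian free group, or an extension of a finitely generated non-abelian
free group by a finite group. -/
def ClassC (G : Type u) [Group G] : Prop :=
  (∃ (n : ℕ) (π : G →* FreeGroup (Fin n)), 2 ≤ n ∧ Function.Surjective π ∧
      Finite π.ker) ∨
  (∃ (F : Subgroup G) (n : ℕ), F.Normal ∧ 2 ≤ n ∧ Nonempty (F ≃* FreeGroup (Fin n)) ∧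
      Finite (G ⧸ F))

/-- `n`-chains of the inhomogeneous bar complex computing the integral homology of `G`:
the free `ℤ`-module on `n`-tuples of elements of `G`. -/
def barChains (G : Type u) [Group G] (n : ℕ) : Type u := (Fin n → G) →₀ ℤ

noncomputable instance (G : Type u) [Group G] (n : ℕ) : AddCommGroup (barChains G n) := by
  unfold barChains; infer_instance

noncomputable instance (G : Type u) [Group G] (n : ℕ) : Module ℤ (barChains G n) := by
  unfold barChains; infer_instance

/-- The boundary map `∂ : C_{n+1} → C_n` of the inhomogeneous bar complex (with trivial
`ℤ` coefficients). -/
noncomputable def barBoundary (G : Type u) [Group G] (n : ℕ) :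
    barChains G (n + 1) →ₗ[ℤ] barChains G n :=
  Finsupp.lift (barChains G n) ℤ (Fin (n + 1) → G) fun g =>
    Finsupp.single (Fin.tail g) 1
    + (∑ i : Fin n, ((-1 : ℤ) ^ ((i : ℕ) + 1)) •
        Finsupp.single (fun j : Fin n =>
          if (j : ℕ) < (i : ℕ) then g (Fin.castSucc j)
          else if (j : ℕ) = (i : ℕ) then g (Fin.castSucc j) * g (Fin.succ j)
          else g (Fin.succ j)) (1 : ℤ))
    + ((-1 : ℤ) ^ (n + 1)) • Finsupp.single (Fin.init g) 1

/-- The `n`-th integral homology group `H_n(G)` (for `n ≥ 1`), computed from the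
inhomogeneous bar complex: `ker ∂ₙ / im ∂ₙ₊₁`. -/
noncomputable def GroupHomology (G : Type u) [Group G] (n : ℕ) : Type u :=
  ↥(LinearMap.ker (barBoundary G (n - 1))) ⧸
    Submodule.comap (LinearMap.ker (barBoundary G (n - 1))).subtype
      (LinearMap.range (barBoundary G (n - 1 + 1)))

section Aux

open Subgroup

lemma mem_of_gen {K : Type u} [Group K] [IsFreeGroup K] (S : Subgroup K)
    (h : ∀ x : IsFreeGroup.Generators K, IsFreeGroup.of x ∈ S) (y : K) : y ∈ S := by
  have key : S.subtype.comp (IsFreeGroup.lift fun x => (⟨IsFreeGroup.of x, h x⟩ : S))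
      = MonoidHom.id K := IsFreeGroup.ext_hom (fun a => by simp)
  have := DFunLike.congr_fun key y
  simp only [MonoidHom.comp_apply, MonoidHom.id_apply] at this
  rw [← this]
  exact ((IsFreeGroup.lift fun x => (⟨IsFreeGroup.of x, h x⟩ : S)) y).2

lemma closure_comm {K : Type u} [Group K] (T : Set K)
    (h : ∀ a ∈ T, ∀ b ∈ T, a * b = b * a) :
    ∀ p q : K, p ∈ Subgroup.closure T → q ∈ Subgroup.closure T → p * q = q * p := by
  have step1 : ∀ a ∈ T, Subgroup.closure T ≤ Subgroup.centralizer {a} := by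
    intro a ha
    rw [Subgroup.closure_le]
    intro b hb
    rw [SetLike.mem_coe, Subgroup.mem_centralizer_singleton_iff]
    exact h b hb a ha
  intro p q hp hq
  have h2 : Subgroup.closure T ≤ Subgroup.centralizer {p} := by
    rw [Subgroup.closure_le]
    intro a ha
    rw [SetLike.mem_coe, Subgroup.mem_centralizer_singleton_iff]
    exact (Subgroup.mem_centralizer_singleton_iff.mp (step1 a ha hp)).symm
  exact (Subgroup.mem_centralizer_singleton_iff.mp (h2 hq)).symm

open IsFreeGroup in
lemma cyclic_struct {K : Type u} [Group K] [IsFreeGroup K]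
    (hc : ∀ p q : K, p * q = q * p) :
    ∃ x : K, (∀ y : K, y ∈ Subgroup.zpowers x) ∧
      ((∃ y : K, y ≠ 1) → ∀ j : ℤ, x ^ j = 1 → j = 0) := by
  classical
  have hsub : ∀ u v : Generators K, u = v := by
    intro u v
    by_contra huv
    have key := hc (of u) (of v)
    set f : Generators K → Equiv.Perm (Fin 3) := fun t =>
      if t = u then Equiv.swap (0 : Fin 3) 1 else if t = v then Equiv.swap 0 2 else 1 with hf
    have := congrArg (IsFreeGroup.lift f) key
    have h1 : f u = Equiv.swap (0 : Fin 3) 1 := by rw [hf]; simp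
    have h2 : f v = Equiv.swap (0 : Fin 3) 2 := by
      rw [hf]; simp only []
      rw [if_neg (fun h => huv h.symm)]; simp
    simp only [map_mul, IsFreeGroup.lift_of, h1, h2] at this
    exact absurd this (by decide)
  rcases isEmpty_or_nonempty (Generators K) with hE | hN
  · refine ⟨1, fun y => mem_of_gen _ (fun x => hE.elim x) y, ?_⟩
    rintro ⟨y, hy⟩
    exact absurd (by
      have := mem_of_gen (⊥ : Subgroup K) (fun x => hE.elim x) y
      simpa using this) hy
  · obtain ⟨u⟩ := hN
    refine ⟨of u, fun y => mem_of_gen _ (fun t => by rw [hsub t u]; exact Subgroup.mem_zpowers _) y, ?_⟩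
    intro _ j hj
    have := congrArg (IsFreeGroup.lift fun _ : Generators K => Multiplicative.ofAdd (1 : ℤ)) hj
    simp only [map_zpow, IsFreeGroup.lift_of, map_one] at this
    have h2 := congrArg Multiplicative.toAdd this
    simpa using h2

lemma freegroup_torsionfree {K : Type u} [Group K] [IsFreeGroup K] (y : K) (hy : y ≠ 1)
    (N : ℤ) (h : y ^ N = 1) : N = 0 := by
  set Z := Subgroup.zpowers y with hZ
  have hc : ∀ p q : Z, p * q = q * p := by
    rintro ⟨p, hp⟩ ⟨q, hq⟩
    obtain ⟨a, ha⟩ := Subgroup.mem_zpowers_iff.mp hp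
    obtain ⟨b, hb⟩ := Subgroup.mem_zpowers_iff.mp hq
    apply Subtype.ext
    simp only [Subgroup.coe_mul]
    rw [← ha, ← hb, ← zpow_add, ← zpow_add, add_comm]
  obtain ⟨x, hgen, htor⟩ := cyclic_struct hc
  have hyZ : (⟨y, Subgroup.mem_zpowers y⟩ : Z) ≠ 1 := by
    intro hcontra
    exact hy (congrArg Subtype.val hcontra)
  obtain ⟨j, hj⟩ := Subgroup.mem_zpowers_iff.mp (hgen ⟨y, Subgroup.mem_zpowers y⟩)
  have hyN : (⟨y, Subgroup.mem_zpowers y⟩ : Z) ^ N = 1 := by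
    apply Subtype.ext
    simpa using h
  have hxjN : x ^ (j * N) = 1 := by rw [zpow_mul, hj]; exact hyN
  have hjN := htor ⟨_, hyZ⟩ _ hxjN
  rcases mul_eq_zero.mp hjN with hj0 | hN0
  · exfalso; apply hyZ; rw [← hj, hj0, zpow_zero]
  · exact hN0

open IsFreeGroup in
lemma comm_of_gens {K : Type u} [Group K] [IsFreeGroup K]
    (h : ∀ u v : Generators K, of u * of v = of v * of u) :
    ∀ p q : K, p * q = q * p := by
  intro p q
  have hmem : ∀ y : K, y ∈ Subgroup.closure (Set.range (of : Generators K → K)) :=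
    fun y => mem_of_gen _ (fun x => Subgroup.subset_closure (Set.mem_range_self x)) y
  refine closure_comm _ ?_ p q (hmem p) (hmem q)
  rintro _ ⟨u, rfl⟩ _ ⟨v, rfl⟩
  exact h u v

open IsFreeGroup in
lemma comm_of_central {K : Type u} [Group K] [IsFreeGroup K] (z : K) (hz : z ≠ 1)
    (hcen : ∀ c : K, c * z = z * c) : ∀ p q : K, p * q = q * p := by
  classical
  apply comm_of_gens
  intro u v
  by_cases huv : u = v
  · subst huv; rfl
  exfalso
  set U := of u with hU
  set V := of v with hV
  -- epsilon homomorphisms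
  set εu : K →* Multiplicative ℤ := IsFreeGroup.lift fun t =>
    if t = u then Multiplicative.ofAdd (1 : ℤ) else 1 with hεu
  set εv : K →* Multiplicative ℤ := IsFreeGroup.lift fun t =>
    if t = v then Multiplicative.ofAdd (1 : ℤ) else 1 with hεv
  have euU : εu U = Multiplicative.ofAdd (1 : ℤ) := by
    rw [hεu, hU, IsFreeGroup.lift_of, if_pos rfl]
  have euV : εu V = 1 := by
    rw [hεu, hV, IsFreeGroup.lift_of, if_neg (fun h => huv h.symm)]
  have evV : εv V = Multiplicative.ofAdd (1 : ℤ) := by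
    rw [hεv, hV, IsFreeGroup.lift_of, if_pos rfl]
  have evU : εv U = 1 := by
    rw [hεv, hU, IsFreeGroup.lift_of, if_neg huv]
  -- the subgroup generated by z and U is cyclic
  have pairS : ∀ a ∈ ({z, U} : Set K), ∀ b ∈ ({z, U} : Set K), a * b = b * a := by
    rintro a (rfl | rfl) b (rfl | rfl)
    · rfl
    · exact (hcen _).symm
    · exact hcen _
    · rfl
  have pairT : ∀ a ∈ ({z, V} : Set K), ∀ b ∈ ({z, V} : Set K), a * b = b * a := by
    rintro a (rfl | rfl) b (rfl | rfl)
    · rfl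
    · exact (hcen _).symm
    · exact hcen _
    · rfl
  set S := Subgroup.closure ({z, U} : Set K) with hS
  set T := Subgroup.closure ({z, V} : Set K) with hT
  have hcS : ∀ p q : S, p * q = q * p := fun p q =>
    Subtype.ext (closure_comm _ pairS p q p.2 q.2)
  have hcT : ∀ p q : T, p * q = q * p := fun p q =>
    Subtype.ext (closure_comm _ pairT p q p.2 q.2)
  obtain ⟨x, hgenS, -⟩ := cyclic_struct hcS
  obtain ⟨x', hgenT, -⟩ := cyclic_struct hcT
  have hzS : z ∈ S := Subgroup.subset_closure (by left; rfl)
  have hUS : U ∈ S := Subgroup.subset_closure (by right; rfl)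
  have hzT : z ∈ T := Subgroup.subset_closure (by left; rfl)
  have hVT : V ∈ T := Subgroup.subset_closure (by right; rfl)
  obtain ⟨i, hi⟩ := Subgroup.mem_zpowers_iff.mp (hgenS ⟨U, hUS⟩)
  obtain ⟨j, hj⟩ := Subgroup.mem_zpowers_iff.mp (hgenS ⟨z, hzS⟩)
  obtain ⟨k, hk⟩ := Subgroup.mem_zpowers_iff.mp (hgenT ⟨V, hVT⟩)
  obtain ⟨l, hl⟩ := Subgroup.mem_zpowers_iff.mp (hgenT ⟨z, hzT⟩)
  have hi' : (x : K) ^ i = U := by have := congrArg Subtype.val hi; simpa using this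
  have hj' : (x : K) ^ j = z := by have := congrArg Subtype.val hj; simpa using this
  have hk' : (x' : K) ^ k = V := by have := congrArg Subtype.val hk; simpa using this
  have hl' : (x' : K) ^ l = z := by have := congrArg Subtype.val hl; simpa using this
  have e1 : i * Multiplicative.toAdd (εu (x : K)) = 1 := by
    have := congrArg (fun w => Multiplicative.toAdd (εu w)) hi'
    simpa [map_zpow, toAdd_zpow, euU, smul_eq_mul] using this
  have e2 : k * Multiplicative.toAdd (εv (x' : K)) = 1 := by
    have := congrArg (fun w => Multiplicative.toAdd (εv w)) hk'
    simpa [map_zpow, toAdd_zpow, evV, smul_eq_mul] using this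
  have e3 : k * Multiplicative.toAdd (εu (x' : K)) = 0 := by
    have := congrArg (fun w => Multiplicative.toAdd (εu w)) hk'
    simpa [map_zpow, toAdd_zpow, euV, smul_eq_mul] using this
  have e4 : j * Multiplicative.toAdd (εu (x : K)) = l * Multiplicative.toAdd (εu (x' : K)) := by
    have h1 := congrArg (fun w => Multiplicative.toAdd (εu w)) hj'
    have h2 := congrArg (fun w => Multiplicative.toAdd (εu w)) hl'
    simp only [map_zpow, toAdd_zpow, smul_eq_mul] at h1 h2
    rw [h1, ← h2]
  have hk0 : k ≠ 0 := by intro h; rw [h, zero_mul] at e2; exact one_ne_zero e2.symm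
  have hdu0 : Multiplicative.toAdd (εu (x' : K)) = 0 := by
    rcases mul_eq_zero.mp e3 with h | h
    · exact absurd h hk0
    · exact h
  have hcu0 : Multiplicative.toAdd (εu (x : K)) ≠ 0 := by
    intro h; rw [h, mul_zero] at e1; exact one_ne_zero e1.symm
  have hj0 : j = 0 := by
    rw [hdu0, mul_zero] at e4
    rcases mul_eq_zero.mp e4 with h | h
    · exact h
    · exact absurd h hcu0
  apply hz
  rw [← hj', hj0, zpow_zero]

lemma main_free {F : Type u} [Group F] [IsFreeGroup F]
    (a b : F) (h2 : a ^ 2 * b ^ 2 ≠ b ^ 2 * a ^ 2)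
    (A : Subgroup F) (hA : A.Normal) (hab : ∀ p q : A, p * q = q * p) : A = ⊥ := by
  obtain ⟨xA, hgen, -⟩ := cyclic_struct hab
  set x : F := (xA : F) with hx
  by_cases hx1 : x = 1
  · -- A is trivial
    rw [Subgroup.eq_bot_iff_forall]
    intro y hy
    obtain ⟨k, hk⟩ := Subgroup.mem_zpowers_iff.mp (hgen ⟨y, hy⟩)
    have := congrArg Subtype.val hk
    simpa [← hx, hx1] using this.symm
  exfalso
  -- squares centralize x
  have hsq : ∀ g : F, g ^ 2 * x = x * g ^ 2 := by
    intro g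
    have hxm : x ∈ A := xA.2
    have hconj : g * x * g⁻¹ ∈ A := hA.conj_mem x hxm g
    have hconj' : g⁻¹ * x * g ∈ A := by
      have := hA.conj_mem x hxm g⁻¹
      simpa using this
    obtain ⟨k, hk⟩ := Subgroup.mem_zpowers_iff.mp (hgen ⟨_, hconj⟩)
    obtain ⟨m, hm⟩ := Subgroup.mem_zpowers_iff.mp (hgen ⟨_, hconj'⟩)
    have hk' : x ^ k = g * x * g⁻¹ := by have := congrArg Subtype.val hk; simpa [← hx] using this
    have hm' : x ^ m = g⁻¹ * x * g := by have := congrArg Subtype.val hm; simpa [← hx] using this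
    have hcomp : x ^ (m * k) = x := by
      calc x ^ (m * k) = (x ^ m) ^ k := by rw [zpow_mul]
        _ = (g⁻¹ * x * g) ^ k := by rw [hm']
        _ = g⁻¹ * x ^ k * g := by
              have := conj_zpow (i := k) (a := g⁻¹) (b := x)
              simpa using this
        _ = g⁻¹ * (g * x * g⁻¹) * g := by rw [hk']
        _ = x := by group
    have hmk : m * k = 1 := by
      have h1 : x ^ (m * k - 1) = 1 := by
        rw [zpow_sub, hcomp, zpow_one, mul_inv_cancel]
      have := freegroup_torsionfree x hx1 _ h1
      omega
    have hkunit : k = 1 ∨ k = -1 := by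
      have : IsUnit k := IsUnit.of_mul_eq_one m (by rw [mul_comm]; exact hmk)
      exact Int.isUnit_iff.mp this
    rcases hkunit with rfl | rfl
    · -- g commutes with x
      have e : g * x = x * g := by
        have := hk'
        rw [zpow_one] at this
        rw [eq_comm, mul_inv_eq_iff_eq_mul] at this
        rw [← this]
      rw [pow_two, mul_assoc, e, ← mul_assoc, e, mul_assoc]
    · -- g inverts x
      have e : g * x * g⁻¹ = x⁻¹ := by rw [← hk', zpow_neg_one]
      have e1 : g * x = x⁻¹ * g := by
        rw [mul_inv_eq_iff_eq_mul] at e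
        rw [e]
      have e2 : g * x⁻¹ = x * g := by
        have := congrArg (fun w => w⁻¹) e
        simp only [mul_inv_rev, inv_inv] at this
        rw [← mul_assoc] at this
        rw [mul_inv_eq_iff_eq_mul] at this
        rw [this]
      calc g ^ 2 * x = g * (g * x) := by rw [pow_two, mul_assoc]
        _ = g * (x⁻¹ * g) := by rw [e1]
        _ = (g * x⁻¹) * g := by rw [mul_assoc]
        _ = x * g * g := by rw [e2]
        _ = x * g ^ 2 := by rw [pow_two, mul_assoc]
  -- the centralizer of x is commutative, contradiction with a, b
  set C := Subgroup.centralizer ({x} : Set F) with hC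
  have hxC : x ∈ C := Subgroup.mem_centralizer_singleton_iff.mpr rfl
  have hxC1 : (⟨x, hxC⟩ : C) ≠ 1 := by
    intro h; exact hx1 (congrArg Subtype.val h)
  have hcen : ∀ c : C, c * (⟨x, hxC⟩ : C) = (⟨x, hxC⟩ : C) * c := by
    intro c
    exact Subtype.ext (Subgroup.mem_centralizer_singleton_iff.mp c.2)
  have hcomm := comm_of_central (⟨x, hxC⟩ : C) hxC1 hcen
  have ha2 : a ^ 2 ∈ C := Subgroup.mem_centralizer_singleton_iff.mpr (hsq a)
  have hb2 : b ^ 2 ∈ C := Subgroup.mem_centralizer_singleton_iff.mpr (hsq b)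
  exact h2 (congrArg Subtype.val (hcomm ⟨a ^ 2, ha2⟩ ⟨b ^ 2, hb2⟩))

lemma perm_fact : ¬ ((Equiv.swap (0:Fin 5) 1 * Equiv.swap 1 2) ^ 2 *
    (Equiv.swap (2:Fin 5) 3 * Equiv.swap 3 4) ^ 2
    = (Equiv.swap (2:Fin 5) 3 * Equiv.swap 3 4) ^ 2 *
      (Equiv.swap (0:Fin 5) 1 * Equiv.swap 1 2) ^ 2) := by decide

lemma squares_noncomm {n : ℕ} (hn : 2 ≤ n) :
    ∃ a b : FreeGroup (Fin n), a ^ 2 * b ^ 2 ≠ b ^ 2 * a ^ 2 := by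
  classical
  have h0 : (0 : ℕ) < n := by omega
  have h1 : (1 : ℕ) < n := by omega
  set i0 : Fin n := ⟨0, h0⟩ with hi0
  set i1 : Fin n := ⟨1, h1⟩ with hi1
  have h01 : i0 ≠ i1 := by simp [hi0, hi1, Fin.ext_iff]
  refine ⟨FreeGroup.of i0, FreeGroup.of i1, fun h => ?_⟩
  set f : Fin n → Equiv.Perm (Fin 5) := fun i =>
    if i = i0 then Equiv.swap 0 1 * Equiv.swap 1 2
    else if i = i1 then Equiv.swap 2 3 * Equiv.swap 3 4 else 1 with hf
  have key := congrArg (FreeGroup.lift f) h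
  have hf0 : f i0 = Equiv.swap 0 1 * Equiv.swap 1 2 := by rw [hf]; simp
  have hf1 : f i1 = Equiv.swap 2 3 * Equiv.swap 3 4 := by
    rw [hf]; simp only []
    rw [if_neg (fun hh => h01 hh.symm)]; simp
  simp only [map_mul, map_pow, FreeGroup.lift_apply_of, hf0, hf1] at key
  exact perm_fact key

end Aux

/-- if `G ∈ 𝒞` and `N` is an abelian normal subgroup of `G`, then `N` is
finite and `G/N` again belongs to `𝒞`. -/
theorem classC_quotient_abelian_normal {G : Type u} [Group G] (hC : ClassC G)
    (N : Subgroup G) [N.Normal] (hab : ∀ a b : N, a * b = b * a) :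
    Finite N ∧ ClassC (G ⧸ N) := by
  rcases hC with ⟨n, π, hn, hsurj, hker⟩ | ⟨F, n, hFn, hn, ⟨e⟩, hQ⟩
  · -- Case 1 : finite-by-free
    obtain ⟨a, b, hsq⟩ := squares_noncomm hn
    have hNmapNorm : (N.map π).Normal := Subgroup.Normal.map ‹N.Normal› π hsurj
    have habm : ∀ p q : ↥(N.map π), p * q = q * p := by
      rintro ⟨p, hp⟩ ⟨q, hq⟩
      obtain ⟨xp, hxp, rfl⟩ := Subgroup.mem_map.mp hp
      obtain ⟨xq, hxq, rfl⟩ := Subgroup.mem_map.mp hq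
      apply Subtype.ext
      simp only [Subgroup.coe_mul, ← map_mul]
      exact congrArg π (congrArg Subtype.val (hab ⟨xp, hxp⟩ ⟨xq, hxq⟩))
    have hbot : N.map π = ⊥ := main_free a b hsq (N.map π) hNmapNorm habm
    have hNker : N ≤ π.ker := (Subgroup.map_eq_bot_iff _).mp hbot
    have hfinN : Finite N :=
      Finite.of_injective (Subgroup.inclusion hNker) (Subgroup.inclusion_injective hNker)
    refine ⟨hfinN, Or.inl ⟨n, QuotientGroup.lift N π hNker, hn, ?_, ?_⟩⟩
    · intro w
      obtain ⟨g, rfl⟩ := hsurj w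
      exact ⟨QuotientGroup.mk g, rfl⟩
    · set πq := QuotientGroup.lift N π hNker with hπq
      have hsurj2 : Function.Surjective
          (fun k : ↥π.ker => (⟨((k : G) : G ⧸ N),
            by rw [MonoidHom.mem_ker, hπq, QuotientGroup.lift_mk]
               exact k.2⟩ : ↥πq.ker)) := by
        rintro ⟨w, hw⟩
        obtain ⟨g, rfl⟩ := QuotientGroup.mk_surjective w
        have hg : g ∈ π.ker := by
          rw [MonoidHom.mem_ker] at hw ⊢
          rw [hπq, QuotientGroup.lift_mk] at hw
          exact hw
        exact ⟨⟨g, hg⟩, Subtype.ext rfl⟩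
      exact Finite.of_surjective _ hsurj2
  · -- Case 2 : free-by-finite
    haveI := hFn
    haveI : IsFreeGroup ↥F := IsFreeGroup.ofMulEquiv e.symm
    obtain ⟨a0, b0, hsq0⟩ := squares_noncomm hn
    have hsq : (e.symm a0) ^ 2 * (e.symm b0) ^ 2 ≠ (e.symm b0) ^ 2 * (e.symm a0) ^ 2 := by
      intro h
      apply hsq0
      have := congrArg e h
      simpa [map_mul, map_pow] using this
    have hAnorm : (N.subgroupOf F).Normal := Subgroup.Normal.subgroupOf ‹N.Normal› F
    have habA : ∀ p q : ↥(N.subgroupOf F), p * q = q * p := by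
      rintro ⟨p, hp⟩ ⟨q, hq⟩
      rw [Subgroup.mem_subgroupOf] at hp hq
      apply Subtype.ext
      apply Subtype.ext
      simp only [Subgroup.coe_mul]
      exact congrArg Subtype.val (hab ⟨↑p, hp⟩ ⟨↑q, hq⟩)
    have hbot : N.subgroupOf F = ⊥ := main_free _ _ hsq (N.subgroupOf F) hAnorm habA
    have key : ∀ g ∈ N, g ∈ F → g = 1 := by
      intro g hgN hgF
      have hmem : (⟨g, hgF⟩ : F) ∈ N.subgroupOf F := Subgroup.mem_subgroupOf.mpr hgN
      rw [hbot, Subgroup.mem_bot] at hmem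
      exact congrArg Subtype.val hmem
    -- N is finite
    have hinjN : Function.Injective ((QuotientGroup.mk' F).comp N.subtype) := by
      rw [← MonoidHom.ker_eq_bot_iff]
      rw [Subgroup.eq_bot_iff_forall]
      intro x hx
      rw [MonoidHom.mem_ker, MonoidHom.comp_apply] at hx
      have : (x : G) ∈ F := (QuotientGroup.eq_one_iff _).mp hx
      exact Subtype.ext (key x x.2 this)
    have hfinN : Finite N := Finite.of_injective _ hinjN
    -- image of F in G ⧸ N
    set F' : Subgroup (G ⧸ N) := F.map (QuotientGroup.mk' N) with hF'
    have hF'norm : F'.Normal :=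
      Subgroup.Normal.map hFn (QuotientGroup.mk' N) (QuotientGroup.mk'_surjective N)
    set φF := (QuotientGroup.mk' N).comp F.subtype with hφF
    have hinjF : Function.Injective φF := by
      rw [← MonoidHom.ker_eq_bot_iff]
      rw [Subgroup.eq_bot_iff_forall]
      intro x hx
      rw [MonoidHom.mem_ker, hφF, MonoidHom.comp_apply] at hx
      have : (x : G) ∈ N := (QuotientGroup.eq_one_iff _).mp hx
      exact Subtype.ext (key x this x.2)
    have hrange : φF.range = F' := by
      rw [hφF, MonoidHom.range_comp, Subgroup.range_subtype]
    have eF : ↥F' ≃* FreeGroup (Fin n) :=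
      (((MulEquiv.subgroupCongr hrange).symm.trans
        (MonoidHom.ofInjective hinjF).symm).trans e)
    -- finiteness of the quotient
    haveI := hF'norm
    have hFsub : ∀ x ∈ F, ((QuotientGroup.mk' F').comp (QuotientGroup.mk' N)) x = 1 := by
      intro x hx
      rw [MonoidHom.comp_apply]
      exact (QuotientGroup.eq_one_iff _).mpr (Subgroup.mem_map.mpr ⟨x, hx, rfl⟩)
    have hFsub' : F ≤ ((QuotientGroup.mk' F').comp (QuotientGroup.mk' N)).ker := by
      intro x hx; rw [MonoidHom.mem_ker]; exact hFsub x hx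
    set θ := QuotientGroup.lift F ((QuotientGroup.mk' F').comp (QuotientGroup.mk' N)) hFsub'
      with hθ
    have hsurjθ : Function.Surjective θ := by
      intro z
      obtain ⟨w, rfl⟩ := QuotientGroup.mk_surjective z
      obtain ⟨g, rfl⟩ := QuotientGroup.mk_surjective w
      exact ⟨QuotientGroup.mk g, by rw [hθ, QuotientGroup.lift_mk]; rfl⟩
    have hfinQ : Finite ((G ⧸ N) ⧸ F') := Finite.of_surjective θ hsurjθ
    exact ⟨hfinN, Or.inr ⟨F', n, hF'norm, hn, ⟨eF⟩, hfinQ⟩⟩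
end
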